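/- arXiv:1212.3111 — 4 statements merged into one kernel-verified Lean document; each statement's English description precedes it below -/
import Mathlib

section
/- Let h be a positive bounded Borel function on (0,1) and p_n → ∞. If conditions (NP1) and (NP2) hold, then for all ε ∈ (0, 1−y_0), sup_{x∈Ω} | ∫_{1−ε}^1 y^{p_n−1} h(y) 𝔽̄(y|x) dy / ∫_0^1 y^{p_n−1} h(y) 𝔽̄(y|x) dy − 1 | → 0 as n → ∞. -/
open MeasureTheory Filter Set Metric ProbabilityTheory

noncomputable section

theorem high_order_moment_localization
    (d : ℕ) (hd : 0 < d)
    (E Ω : Set (Fin d → ℝ)) (hEclosed : IsClosed E)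
    (hΩcomp : IsCompact Ω) (hΩE : Ω ⊆ interior E)
    (p : ℕ → ℝ) (hppos : ∀ n, 0 < p n) (hptop : Tendsto p atTop atTop)
    (g : (Fin d → ℝ) → ℝ) (hgpos : ∀ x ∈ E, 0 < g x)
    (Fbar : ℝ → (Fin d → ℝ) → ℝ)
    (hFanti : ∀ x ∈ E, AntitoneOn (fun y => Fbar y x) (Icc (0:ℝ) 1))
    (hFnn : ∀ x ∈ E, ∀ y ∈ Icc (0:ℝ) 1, 0 ≤ Fbar y x)
    (hFone : ∀ x ∈ E, Fbar 0 x = 1)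
    (hFpos : ∀ x ∈ E, ∀ y ∈ Ico (0:ℝ) 1, 0 < Fbar y x)
    (hFend : ∀ x ∈ E, ∀ y : ℝ, 1 ≤ y → Fbar y x = 0)
    (hFmeas : ∀ x ∈ E, Measurable fun y => Fbar y x)
    (y₀ : ℝ) (hy₀ : y₀ ∈ Ioo (0:ℝ) 1)
    (hNP2 : ∀ y ∈ Icc y₀ 1, ContinuousOn (fun x => Fbar y x) E)
    (φ : ℝ → ℝ) (hφpos : ∀ y ∈ Ioo (0:ℝ) 1, 0 < φ y)
    (hφbd : ∃ M, ∀ y ∈ Ioo (0:ℝ) 1, φ y ≤ M) (hφmeas : Measurable φ) :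
    ∀ ε ∈ Ioo (0:ℝ) (1 - y₀),
      Tendsto (fun n => ⨆ x : Ω,
        |(∫ y in (1 - ε)..1, y ^ (p n - 1) * φ y * Fbar y (x : Fin d → ℝ)) /
          (∫ y in (0:ℝ)..1, y ^ (p n - 1) * φ y * Fbar y (x : Fin d → ℝ)) - 1|)
        atTop (nhds 0) := by
  intro ε hε
  obtain ⟨hε0, hεlt⟩ := hε
  obtain ⟨hy₀0, hy₀1⟩ := hy₀
  obtain ⟨M, hM⟩ := hφbd
  have hM0 : 0 < M :=
    lt_of_lt_of_le (hφpos (1/2) ⟨by norm_num, by norm_num⟩) (hM _ ⟨by norm_num, by norm_num⟩)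
  set a := 1 - ε with ha_def
  set b := 1 - ε/2 with hb_def
  have hay : y₀ < a := by simp only [ha_def]; linarith
  have ha0 : 0 < a := lt_trans hy₀0 hay
  have hab : a < b := by simp only [ha_def, hb_def]; linarith
  have hb1 : b < 1 := by simp only [hb_def]; linarith
  have ha1 : a < 1 := lt_trans hab hb1
  have hb0 : 0 < b := lt_trans ha0 hab
  rcases isEmpty_or_nonempty Ω with hemp | hne
  · simp only [Real.iSup_of_isEmpty]
    exact tendsto_const_nhds
  · have hΩne : Ω.Nonempty := Set.nonempty_coe_sort.mp hne
    have hΩsubE : Ω ⊆ E := hΩE.trans interior_subset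
    have hbmem : b ∈ Icc y₀ 1 := ⟨by linarith, hb1.le⟩
    obtain ⟨x₀, hx₀Ω, hx₀min⟩ := hΩcomp.exists_isMinOn hΩne ((hNP2 b hbmem).mono hΩsubE)
    set m := Fbar b x₀ with hm_def
    have hm0 : 0 < m := hFpos x₀ (hΩsubE hx₀Ω) b ⟨hb0.le, hb1⟩
    -- integrability of φ on [a, b]
    have hφint : IntervalIntegrable φ volume a b := by
      apply IntervalIntegrable.mono_fun (intervalIntegrable_const (c := M))
        hφmeas.aestronglyMeasurable.restrict
      rw [uIoc_of_le hab.le]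
      filter_upwards [ae_restrict_mem measurableSet_Ioc] with y hy
      have hy01 : y ∈ Ioo (0:ℝ) 1 := ⟨lt_trans ha0 hy.1, lt_of_le_of_lt hy.2 hb1⟩
      rw [Real.norm_eq_abs, Real.norm_eq_abs, abs_of_pos (hφpos y hy01), abs_of_pos hM0]
      exact hM y hy01
    set c := ∫ y in a..b, φ y with hc_def
    have hc0 : 0 < c := by
      apply intervalIntegral.intervalIntegral_pos_of_pos_on hφint _ hab
      intro y hy
      exact hφpos y ⟨lt_trans ha0 hy.1, lt_trans hy.2 hb1⟩
    set K := m * c with hK_def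
    have hK0 : 0 < K := mul_pos hm0 hc0
    have key : ∀ n : ℕ, ∀ x ∈ Ω,
        |(∫ y in a..1, y ^ (p n - 1) * φ y * Fbar y x) /
          (∫ y in (0:ℝ)..1, y ^ (p n - 1) * φ y * Fbar y x) - 1| ≤ M / (p n * K) := by
      intro n x hx
      have hxE : x ∈ E := hΩsubE hx
      have hpn : 0 < p n := hppos n
      set q := p n - 1 with hq_def
      have hq1 : (-1:ℝ) < q := by simp only [hq_def]; linarith
      set f : ℝ → ℝ := fun y => y ^ q * φ y * Fbar y x with hf_def
      have hfmeas : Measurable f := by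
        apply Measurable.mul _ (hFmeas x hxE)
        apply Measurable.mul _ hφmeas
        measurability
      have hFle1 : ∀ y ∈ Icc (0:ℝ) 1, Fbar y x ≤ 1 := by
        intro y hy
        have := hFanti x hxE (left_mem_Icc.mpr zero_le_one) hy hy.1
        simpa [hFone x hxE] using this
      have hfnn : ∀ y ∈ Ioc (0:ℝ) 1, 0 ≤ f y := by
        intro y hy
        rcases lt_or_eq_of_le hy.2 with h1 | h1
        · exact mul_nonneg (mul_nonneg (Real.rpow_nonneg hy.1.le q)
            (hφpos y ⟨hy.1, h1⟩).le) (hFnn x hxE y ⟨hy.1.le, hy.2⟩)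
        · simp [hf_def, hFend x hxE y h1.ge]
      have hfle : ∀ y ∈ Ioc (0:ℝ) 1, f y ≤ M * y ^ q := by
        intro y hy
        rcases lt_or_eq_of_le hy.2 with h1 | h1
        · have h2 : φ y * Fbar y x ≤ M * 1 :=
            mul_le_mul (hM y ⟨hy.1, h1⟩) (hFle1 y ⟨hy.1.le, hy.2⟩)
              (hFnn x hxE y ⟨hy.1.le, hy.2⟩) hM0.le
          calc f y = y ^ q * (φ y * Fbar y x) := by rw [hf_def]; ring
            _ ≤ y ^ q * (M * 1) :=
              mul_le_mul_of_nonneg_left h2 (Real.rpow_nonneg hy.1.le q)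
            _ = M * y ^ q := by ring
        · have hf0 : f y = 0 := by simp [hf_def, hFend x hxE y h1.ge]
          rw [hf0]
          exact mul_nonneg hM0.le (Real.rpow_nonneg hy.1.le q)
      -- integrability of f on subintervals
      have hgint : IntervalIntegrable (fun y : ℝ => M * y ^ q) volume 0 1 :=
        (intervalIntegral.intervalIntegrable_rpow' hq1).const_mul M
      have hfint01 : IntervalIntegrable f volume 0 1 := by
        apply hgint.mono_fun hfmeas.aestronglyMeasurable.restrict
        rw [uIoc_of_le zero_le_one]
        filter_upwards [ae_restrict_mem measurableSet_Ioc] with y hy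
        rw [Real.norm_eq_abs, Real.norm_eq_abs, abs_of_nonneg (hfnn y hy),
          abs_of_nonneg (mul_nonneg hM0.le (Real.rpow_nonneg hy.1.le q))]
        exact hfle y hy
      have hfint0a : IntervalIntegrable f volume 0 a := hfint01.mono_set (by
        rw [uIcc_of_le ha0.le, uIcc_of_le zero_le_one]; exact Icc_subset_Icc le_rfl ha1.le)
      have hfinta1 : IntervalIntegrable f volume a 1 := hfint01.mono_set (by
        rw [uIcc_of_le ha1.le, uIcc_of_le zero_le_one]; exact Icc_subset_Icc ha0.le le_rfl)
      have hfintab : IntervalIntegrable f volume a b := hfint01.mono_set (by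
        rw [uIcc_of_le hab.le, uIcc_of_le zero_le_one]; exact Icc_subset_Icc ha0.le hb1.le)
      have hfintb1 : IntervalIntegrable f volume b 1 := hfint01.mono_set (by
        rw [uIcc_of_le hb1.le, uIcc_of_le zero_le_one]; exact Icc_subset_Icc hb0.le le_rfl)
      set A := ∫ y in a..1, f y with hA_def
      set B := ∫ y in (0:ℝ)..1, f y with hB_def
      set D := ∫ y in (0:ℝ)..a, f y with hD_def
      have hDA : D + A = B := intervalIntegral.integral_add_adjacent_intervals hfint0a hfinta1
      -- D is nonnegative
      have hD0 : 0 ≤ D := by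
        rw [hD_def, intervalIntegral.integral_of_le ha0.le]
        apply setIntegral_nonneg measurableSet_Ioc
        intro y hy
        exact hfnn y ⟨hy.1, hy.2.trans ha1.le⟩
      -- D is bounded above
      have hDle : D ≤ M * a ^ (p n) / p n := by
        have h1 : D ≤ ∫ y in (0:ℝ)..a, M * y ^ q := by
          rw [hD_def, intervalIntegral.integral_of_le ha0.le,
            intervalIntegral.integral_of_le ha0.le]
          apply setIntegral_mono_on hfint0a.1
            ((hgint.mono_set (by
              rw [uIcc_of_le ha0.le, uIcc_of_le zero_le_one]
              exact Icc_subset_Icc le_rfl ha1.le)).1) measurableSet_Ioc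
          intro y hy
          exact hfle y ⟨hy.1, hy.2.trans ha1.le⟩
        have h2 : (∫ y in (0:ℝ)..a, M * y ^ q) = M * a ^ (p n) / p n := by
          rw [intervalIntegral.integral_const_mul, integral_rpow (Or.inl hq1)]
          have hqq : q + 1 = p n := by rw [hq_def]; ring
          rw [hqq, Real.zero_rpow hpn.ne']
          ring
        linarith
      -- A is bounded below
      have hAlb : a ^ (p n) * K ≤ A := by
        have h3 : (∫ y in a..b, f y) + ∫ y in b..1, f y = A :=
          intervalIntegral.integral_add_adjacent_intervals hfintab hfintb1
        have h4 : 0 ≤ ∫ y in b..1, f y := by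
          rw [intervalIntegral.integral_of_le hb1.le]
          apply setIntegral_nonneg measurableSet_Ioc
          intro y hy
          exact hfnn y ⟨lt_trans hb0 hy.1, hy.2⟩
        have h5 : (∫ y in a..b, (a ^ (p n) * m) * φ y) ≤ ∫ y in a..b, f y := by
          rw [intervalIntegral.integral_of_le hab.le, intervalIntegral.integral_of_le hab.le]
          apply setIntegral_mono_on ((hφint.const_mul _).1) hfintab.1 measurableSet_Ioc
          intro y hy
          have hy0 : 0 < y := lt_trans ha0 hy.1
          have hy1 : y < 1 := lt_of_le_of_lt hy.2 hb1
          have e1 : a ^ (p n) ≤ y ^ q := by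
            calc a ^ (p n) ≤ y ^ (p n) := Real.rpow_le_rpow ha0.le hy.1.le hpn.le
              _ ≤ y ^ q := Real.rpow_le_rpow_of_exponent_ge hy0 hy1.le (by
                  rw [hq_def]; linarith)
          have e2 : m ≤ Fbar y x := by
            have e3 : Fbar b x ≤ Fbar y x :=
              hFanti x hxE ⟨hy0.le, hy1.le⟩ ⟨hb0.le, hb1.le⟩ hy.2
            have e4 : m ≤ Fbar b x := isMinOn_iff.mp hx₀min x hx
            linarith
          have e5 : a ^ (p n) * m ≤ y ^ q * Fbar y x :=
            mul_le_mul e1 e2 hm0.le (Real.rpow_nonneg hy0.le q)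
          calc (a ^ (p n) * m) * φ y ≤ (y ^ q * Fbar y x) * φ y :=
              mul_le_mul_of_nonneg_right e5 (hφpos y ⟨hy0, hy1⟩).le
            _ = f y := by rw [hf_def]; ring
        have h6 : (∫ y in a..b, (a ^ (p n) * m) * φ y) = a ^ (p n) * K := by
          rw [intervalIntegral.integral_const_mul, ← hc_def, hK_def]
          ring
        linarith
      have hap : (0:ℝ) < a ^ (p n) := Real.rpow_pos_of_pos ha0 _
      have hA0 : 0 < A := lt_of_lt_of_le (by positivity) hAlb
      have hB0 : 0 < B := by linarith
      have hAB : A ≤ B := by linarith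
      -- conclude
      have e6 : A / B - 1 = -(D / B) := by
        field_simp
        linarith
      rw [e6, abs_neg, abs_of_nonneg (div_nonneg hD0 hB0.le)]
      calc D / B ≤ D / A := by
            apply div_le_div_of_nonneg_left hD0 hA0 hAB
        _ ≤ (M * a ^ (p n) / p n) / (a ^ (p n) * K) :=
            div_le_div₀ (by positivity) hDle (by positivity) hAlb
        _ = M / (p n * K) := by
            field_simp
    apply squeeze_zero (g := fun n => M / (p n * K))
    · intro n
      exact Real.iSup_nonneg fun x => abs_nonneg _
    · intro n
      exact ciSup_le fun x => key n x x.2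
    · have h7 : Tendsto (fun n => (p n)⁻¹) atTop (nhds 0) := hptop.inv_tendsto_atTop
      have h8 : Tendsto (fun n => (M / K) * (p n)⁻¹) atTop (nhds ((M / K) * 0)) :=
        h7.const_mul _
      rw [mul_zero] at h8
      convert h8 using 2 with n
      ring
end
end

section
/- Assume conditions (NP1), (NP2) and (A1) hold. If p_n → ∞ and p_n h_n^{η_g} → 0 as n → ∞, then sup_{x∈Ω} | m_{p_n+1}(x) / m_{p_n}(x) − g(x) | → 0 as n → ∞. -/
open MeasureTheory Filter Set Metric ProbabilityTheory

noncomputable section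

/-- The conditional moment `m_q(x) = E(Y^q | X = x)`, expressed through the conditional
survival function `F̄(·|x)` of `Y/g(x)` given `X = x`. -/
def mMom (d : ℕ) (g : (Fin d → ℝ) → ℝ) (Fbar : ℝ → (Fin d → ℝ) → ℝ)
    (q : ℝ) (x : Fin d → ℝ) : ℝ :=
  g x ^ q * (q * ∫ y in (0:ℝ)..1, y ^ (q - 1) * Fbar y x)

/-!
With `Z = Y / g(x)` and `μ_q = E[Z ^ q | X = x] = q ∫₀¹ y ^ (q - 1) F̄(y|x) dy` we have
`m_{q+1}(x) / m_q(x) = g(x) μ_{q+1} / μ_q`. Splitting the integrals at a level `t < 1` gives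
`t μ_q - t ^ q ≤ μ_{q+1} ≤ (1 + 1/q) μ_q`, and `μ_q ≥ F̄(s|x) s ^ q` for `t < s < 1`, so
`|μ_{q+1} / μ_q - 1| ≤ 1/q + (1 - t) + (t/s) ^ q / F̄(s|x)`.
By (NP2) and compactness `F̄(s|·)` is bounded below on `Ω`, and the Hölder condition bounds `g`
on `Ω`; letting `q = p_n → ∞` and then `t → 1` gives the uniform convergence.
-/

open Topology

/-- `E[Z ^ q]` for `Z ∈ [0, 1]` with survival function `F`, written via integration by parts;
`mMom d g Fbar q x = g x ^ q * survivalMoment (Fbar · x) q`. -/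
def survivalMoment (F : ℝ → ℝ) (q : ℝ) : ℝ :=
  q * ∫ y in (0 : ℝ)..1, y ^ (q - 1) * F y

section SurvivalMoment

variable {F : ℝ → ℝ}

lemma survivalMoment_add_one (F : ℝ → ℝ) (q : ℝ) :
    survivalMoment F (q + 1) = (q + 1) * ∫ y in (0 : ℝ)..1, y ^ q * F y := by
  simp only [survivalMoment, add_sub_cancel_right]

lemma integral_rpow_sub_one {q : ℝ} (hq : 0 < q) (t : ℝ) :
    ∫ y in (0 : ℝ)..t, y ^ (q - 1) = t ^ q / q := by
  rw [integral_rpow (Or.inl (by linarith)), sub_add_cancel, Real.zero_rpow hq.ne', sub_zero]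

lemma intervalIntegrable_rpow_mul (hFm : Measurable F) (hF : MapsTo F (Icc 0 1) (Icc 0 1))
    {r : ℝ} (hr : 0 ≤ r) {a b : ℝ} (ha : a ∈ Icc (0 : ℝ) 1) (hb : b ∈ Icc (0 : ℝ) 1) :
    IntervalIntegrable (fun y => y ^ r * F y) volume a b := by
  rw [intervalIntegrable_iff]
  refine Integrable.mono' (g := fun _ => (1 : ℝ)) (integrableOn_const measure_Ioc_lt_top.ne)
    (by fun_prop : Measurable fun y => y ^ r * F y).aestronglyMeasurable ?_
  filter_upwards [ae_restrict_mem measurableSet_uIoc] with y hy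
  have hy01 : y ∈ Icc (0 : ℝ) 1 := uIcc_subset_Icc ha hb (uIoc_subset_uIcc hy)
  rw [Real.norm_eq_abs, abs_of_nonneg (mul_nonneg (Real.rpow_nonneg hy01.1 r) (hF hy01).1)]
  exact mul_le_one₀ (Real.rpow_le_one hy01.1 hy01.2 hr) (hF hy01).1 (hF hy01).2

lemma mul_rpow_le_survivalMoment (hFm : Measurable F) (hF : MapsTo F (Icc 0 1) (Icc 0 1))
    (hFa : AntitoneOn F (Icc 0 1)) {q s c : ℝ} (hq : 1 ≤ q) (hs : s ∈ Icc (0 : ℝ) 1)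
    (hc : c ≤ F s) : c * s ^ q ≤ survivalMoment F q := by
  have h0 : (0 : ℝ) ∈ Icc (0 : ℝ) 1 := left_mem_Icc.2 zero_le_one
  have h1 : (1 : ℝ) ∈ Icc (0 : ℝ) 1 := right_mem_Icc.2 zero_le_one
  have hint {a b : ℝ} (ha : a ∈ Icc (0 : ℝ) 1) (hb : b ∈ Icc (0 : ℝ) 1) :=
    intervalIntegrable_rpow_mul hFm hF (r := q - 1) (by linarith) ha hb
  have head :
      (∫ y in (0 : ℝ)..s, y ^ (q - 1)) * c ≤ ∫ y in (0 : ℝ)..s, y ^ (q - 1) * F y := by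
    rw [← intervalIntegral.integral_mul_const]
    refine intervalIntegral.integral_mono_on hs.1
      ((intervalIntegral.intervalIntegrable_rpow' (by linarith)).mul_const c) (hint h0 hs)
      fun y hy => ?_
    exact mul_le_mul_of_nonneg_left (hc.trans (hFa ⟨hy.1, hy.2.trans hs.2⟩ hs hy.2))
      (Real.rpow_nonneg hy.1 _)
  have tail : 0 ≤ ∫ y in s..1, y ^ (q - 1) * F y :=
    intervalIntegral.integral_nonneg hs.2 fun y hy =>
      mul_nonneg (Real.rpow_nonneg (hs.1.trans hy.1) _) (hF ⟨hs.1.trans hy.1, hy.2⟩).1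
  rw [survivalMoment,
    ← intervalIntegral.integral_add_adjacent_intervals (hint h0 hs) (hint hs h1)]
  rw [integral_rpow_sub_one (by linarith)] at head
  have hqc : q * (s ^ q / q * c) = c * s ^ q := by field_simp
  nlinarith

lemma mul_survivalMoment_add_one_le (hFm : Measurable F) (hF : MapsTo F (Icc 0 1) (Icc 0 1))
    {q : ℝ} (hq : 1 ≤ q) : q * survivalMoment F (q + 1) ≤ (q + 1) * survivalMoment F q := by
  have h0 : (0 : ℝ) ∈ Icc (0 : ℝ) 1 := left_mem_Icc.2 zero_le_one
  have h1 : (1 : ℝ) ∈ Icc (0 : ℝ) 1 := right_mem_Icc.2 zero_le_one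
  have hmono : ∫ y in (0 : ℝ)..1, y ^ q * F y ≤ ∫ y in (0 : ℝ)..1, y ^ (q - 1) * F y :=
    intervalIntegral.integral_mono_on zero_le_one
      (intervalIntegrable_rpow_mul hFm hF (by linarith) h0 h1)
      (intervalIntegrable_rpow_mul hFm hF (by linarith) h0 h1) fun y hy =>
      mul_le_mul_of_nonneg_right (Real.rpow_le_rpow_of_exponent_ge' hy.1 hy.2 (by linarith)
        (by linarith)) (hF hy).1
  rw [survivalMoment_add_one, survivalMoment]
  have : 0 ≤ q * (q + 1) := by positivity
  nlinarith

lemma mul_survivalMoment_sub_rpow_le (hFm : Measurable F) (hF : MapsTo F (Icc 0 1) (Icc 0 1))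
    {q t : ℝ} (hq : 1 ≤ q) (ht : t ∈ Icc (0 : ℝ) 1) :
    t * survivalMoment F q - t ^ q ≤ survivalMoment F (q + 1) := by
  have h0 : (0 : ℝ) ∈ Icc (0 : ℝ) 1 := left_mem_Icc.2 zero_le_one
  have h1 : (1 : ℝ) ∈ Icc (0 : ℝ) 1 := right_mem_Icc.2 zero_le_one
  have hJ {a b : ℝ} (ha : a ∈ Icc (0 : ℝ) 1) (hb : b ∈ Icc (0 : ℝ) 1) :=
    intervalIntegrable_rpow_mul hFm hF (r := q - 1) (by linarith) ha hb
  have hK {a b : ℝ} (ha : a ∈ Icc (0 : ℝ) 1) (hb : b ∈ Icc (0 : ℝ) 1) :=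
    intervalIntegrable_rpow_mul hFm hF (r := q) (by linarith) ha hb
  have hnn : ∀ y ∈ Icc (0 : ℝ) 1, ∀ r : ℝ, 0 ≤ y ^ r * F y := fun y hy r =>
    mul_nonneg (Real.rpow_nonneg hy.1 r) (hF hy).1
  -- split at `t`: on `[0, t]` use `F ≤ 1`, on `[t, 1]` use `t ≤ y`
  have head : ∫ y in (0 : ℝ)..t, y ^ (q - 1) * F y ≤ t ^ q / q := by
    rw [← integral_rpow_sub_one (by linarith) t]
    refine intervalIntegral.integral_mono_on ht.1 (hJ h0 ht)
      (intervalIntegral.intervalIntegrable_rpow' (by linarith)) fun y hy => ?_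
    exact mul_le_of_le_one_right (Real.rpow_nonneg hy.1 _) (hF ⟨hy.1, hy.2.trans ht.2⟩).2
  have tail : t * ∫ y in t..1, y ^ (q - 1) * F y ≤ ∫ y in t..1, y ^ q * F y := by
    rw [← intervalIntegral.integral_const_mul]
    refine intervalIntegral.integral_mono_on ht.2 ((hJ ht h1).const_mul t) (hK ht h1)
      fun y hy => ?_
    have hy01 : y ∈ Icc (0 : ℝ) 1 := ⟨ht.1.trans hy.1, hy.2⟩
    calc t * (y ^ (q - 1) * F y) ≤ y * (y ^ (q - 1) * F y) :=
          mul_le_mul_of_nonneg_right hy.1 (hnn y hy01 _)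
      _ = y ^ q * F y := by
          rw [← mul_assoc, ← Real.rpow_one_add' hy01.1 (by linarith), add_sub_cancel]
  have head' : 0 ≤ ∫ y in (0 : ℝ)..t, y ^ q * F y :=
    intervalIntegral.integral_nonneg ht.1 fun y hy => hnn y ⟨hy.1, hy.2.trans ht.2⟩ q
  have tail' : 0 ≤ ∫ y in t..1, y ^ q * F y :=
    intervalIntegral.integral_nonneg ht.2 fun y hy => hnn y ⟨ht.1.trans hy.1, hy.2⟩ q
  have htq : t * t ^ q ≤ t ^ q := mul_le_of_le_one_left (Real.rpow_nonneg ht.1 q) ht.2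
  rw [survivalMoment_add_one, survivalMoment,
    ← intervalIntegral.integral_add_adjacent_intervals (hJ h0 ht) (hJ ht h1),
    ← intervalIntegral.integral_add_adjacent_intervals (hK h0 ht) (hK ht h1)]
  rw [le_div_iff₀ (by linarith)] at head
  nlinarith [mul_le_mul_of_nonneg_left head ht.1,
    mul_le_mul_of_nonneg_left tail (by linarith : 0 ≤ q)]

lemma abs_survivalMoment_div_sub_one_le (hFm : Measurable F)
    (hF : MapsTo F (Icc 0 1) (Icc 0 1)) (hFa : AntitoneOn F (Icc 0 1)) {q t s c : ℝ}
    (hq : 1 ≤ q) (ht : 0 ≤ t) (hts : t < s) (hs : s ≤ 1) (hc : 0 < c) (hcF : c ≤ F s) :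
    |survivalMoment F (q + 1) / survivalMoment F q - 1| ≤
      1 / q + (1 - t) + (t / s) ^ q / c := by
  have hs0 : 0 < s := ht.trans_lt hts
  have hlow := mul_rpow_le_survivalMoment hFm hF hFa hq ⟨hs0.le, hs⟩ hcF
  have hμ : 0 < survivalMoment F q := (by positivity : 0 < c * s ^ q).trans_le hlow
  have hupper : survivalMoment F (q + 1) / survivalMoment F q ≤ 1 + 1 / q := by
    rw [div_le_iff₀ hμ, one_add_div (by linarith), div_mul_eq_mul_div,
      le_div_iff₀ (by linarith)]
    exact (mul_comm _ _).trans_le (mul_survivalMoment_add_one_le hFm hF hq)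
  have hlower : t - (t / s) ^ q / c ≤ survivalMoment F (q + 1) / survivalMoment F q := by
    have hrem : t ^ q / survivalMoment F q ≤ (t / s) ^ q / c := by
      rw [Real.div_rpow ht hs0.le, div_div, mul_comm (s ^ q)]
      exact div_le_div_of_nonneg_left (by positivity) (by positivity) hlow
    rw [le_div_iff₀ hμ]
    have := mul_survivalMoment_sub_rpow_le hFm hF hq ⟨ht, hts.le.trans hs⟩
    rw [div_le_iff₀ hμ] at hrem
    nlinarith
  have : 0 ≤ 1 / q := by positivity
  have : 0 ≤ (t / s) ^ q / c := by positivity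
  rw [abs_le]
  constructor <;> linarith

end SurvivalMoment

lemma mMom_add_one_div_mMom {d : ℕ} {g : (Fin d → ℝ) → ℝ} (Fbar : ℝ → (Fin d → ℝ) → ℝ)
    (q : ℝ) {x : Fin d → ℝ} (hgx : 0 < g x) :
    mMom d g Fbar (q + 1) x / mMom d g Fbar q x =
      g x * (survivalMoment (Fbar · x) (q + 1) / survivalMoment (Fbar · x) q) := by
  rw [mMom, mMom, Real.rpow_add_one hgx.ne', mul_assoc,
    mul_div_mul_left _ _ (Real.rpow_pos_of_pos hgx q).ne', mul_div_assoc]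
  rfl

lemma abs_mMom_div_mMom_sub_le {d : ℕ} {g : (Fin d → ℝ) → ℝ} {Fbar : ℝ → (Fin d → ℝ) → ℝ}
    {x : Fin d → ℝ} {M q t s c : ℝ} (hgx : 0 < g x) (hgM : g x ≤ M)
    (hFm : Measurable (Fbar · x)) (hF : MapsTo (Fbar · x) (Icc 0 1) (Icc 0 1))
    (hFa : AntitoneOn (Fbar · x) (Icc 0 1)) (hq : 1 ≤ q) (ht : 0 ≤ t) (hts : t < s)
    (hs : s ≤ 1) (hc : 0 < c) (hcF : c ≤ Fbar s x) :
    |mMom d g Fbar (q + 1) x / mMom d g Fbar q x - g x| ≤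
      M * (1 / q + (1 - t) + (t / s) ^ q / c) := by
  rw [mMom_add_one_div_mMom Fbar q hgx, ← mul_sub_one, abs_mul, abs_of_pos hgx]
  exact mul_le_mul hgM (abs_survivalMoment_div_sub_one_le hFm hF hFa hq ht hts hs hc hcF)
    (abs_nonneg _) (hgx.le.trans hgM)

lemma IsCompact.exists_pos_forall_le_of_continuousOn {X : Type*} [TopologicalSpace X]
    {K : Set X} (hK : IsCompact K) {φ : X → ℝ} (hφ : ContinuousOn φ K)
    (hpos : ∀ x ∈ K, 0 < φ x) : ∃ c > 0, ∀ x ∈ K, c ≤ φ x := by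
  rcases K.eq_empty_or_nonempty with rfl | hne
  · exact ⟨1, one_pos, by simp⟩
  obtain ⟨x₀, hx₀, hmin⟩ := hK.exists_isMinOn hne hφ
  exact ⟨φ x₀, hpos x₀ hx₀, fun x hx => hmin hx⟩

lemma Bornology.IsBounded.exists_pos_forall_le_of_holder {X : Type*}
    [SeminormedAddCommGroup X] {E K : Set X} {g : X → ℝ} {C η : ℝ}
    (hK : Bornology.IsBounded K) (hKE : K ⊆ E) (hC : 0 ≤ C) (hη : 0 ≤ η) (hg : ∀ x ∈ E, ∀ y ∈ E, |g x - g y| ≤ C * ‖x - y‖ ^ η) :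
    ∃ M > 0, ∀ x ∈ K, g x ≤ M := by
  rcases K.eq_empty_or_nonempty with rfl | ⟨x₀, hx₀⟩
  · exact ⟨1, one_pos, by simp⟩
  obtain ⟨R, hR⟩ := hK.subset_closedBall x₀
  refine ⟨max 1 (g x₀ + C * R ^ η), by positivity, fun x hx => le_max_of_le_right ?_⟩
  have hxR : ‖x - x₀‖ ≤ R := by simpa [dist_eq_norm] using hR hx
  calc g x ≤ g x₀ + |g x - g x₀| := by linarith [le_abs_self (g x - g x₀)]
    _ ≤ g x₀ + C * R ^ η := by
      gcongr
      exact (hg x (hKE hx) x₀ (hKE hx₀)).trans (by gcongr)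

lemma tendsto_one_div_add_add_rpow_div {p : ℕ → ℝ} (hp : Tendsto p atTop atTop) {r : ℝ}
    (hr₀ : 0 ≤ r) (hr₁ : r < 1) (a c : ℝ) :
    Tendsto (fun n => 1 / p n + a + r ^ p n / c) atTop (𝓝 a) := by
  have hgeom := (tendsto_rpow_atTop_of_base_lt_one r (by linarith) hr₁).comp hp
  simpa using (((tendsto_const_nhds (x := (1 : ℝ))).div_atTop hp).add
    (tendsto_const_nhds (x := a))).add (hgeom.div_const c)

theorem uniform_ratio_conditional_moments_general
    (d : ℕ)
    (E Ω : Set (Fin d → ℝ))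
    (hΩcomp : IsCompact Ω) (hΩE : Ω ⊆ interior E)
    (p : ℕ → ℝ)
    (hptop : Tendsto p atTop atTop)
    (g : (Fin d → ℝ) → ℝ) (ηg : ℝ) (hηg : 0 < ηg)
    (hgpos : ∀ x ∈ E, 0 < g x)
    (hgHolder : ∃ cg > 0, ∀ x ∈ E, ∀ y ∈ E, |g x - g y| ≤ cg * ‖x - y‖ ^ ηg)
    (Fbar : ℝ → (Fin d → ℝ) → ℝ)
    (hFanti : ∀ x ∈ E, AntitoneOn (fun y => Fbar y x) (Icc (0:ℝ) 1))
    (hFnn : ∀ x ∈ E, ∀ y ∈ Icc (0:ℝ) 1, 0 ≤ Fbar y x)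
    (hFone : ∀ x ∈ E, Fbar 0 x = 1)
    (hFpos : ∀ x ∈ E, ∀ y ∈ Ico (0:ℝ) 1, 0 < Fbar y x)
    (hFmeas : ∀ x ∈ E, Measurable fun y => Fbar y x)
    (y₀ : ℝ) (hy₀ : y₀ ∈ Ioo (0:ℝ) 1)
    (hNP2 : ∀ y ∈ Icc y₀ 1, ContinuousOn (fun x => Fbar y x) E)
    :
    Tendsto (fun n => ⨆ x : Ω,
      |mMom d g Fbar (p n + 1) (x : Fin d → ℝ) / mMom d g Fbar (p n) (x : Fin d → ℝ) -
        g (x : Fin d → ℝ)|) atTop (nhds 0) := by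
  have hΩE' : Ω ⊆ E := hΩE.trans interior_subset
  have hF : ∀ x ∈ E, MapsTo (Fbar · x) (Icc 0 1) (Icc 0 1) := fun x hx y hy =>
    ⟨hFnn x hx y hy, (hFanti x hx (left_mem_Icc.2 zero_le_one) hy hy.1).trans_eq (hFone x hx)⟩
  obtain ⟨cg, hcg, hHol⟩ := hgHolder
  obtain ⟨M, hM, hgM⟩ :=
    hΩcomp.isBounded.exists_pos_forall_le_of_holder hΩE' hcg.le hηg.le hHol
  refine tendsto_order.2 ⟨fun a ha => .of_forall fun n =>
    ha.trans_le (Real.iSup_nonneg fun _ => abs_nonneg _), fun ε hε => ?_⟩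
  -- first make the bias `M * (1 - t)` small, then the remaining terms vanish as `p n → ∞`
  have hbias : Tendsto (fun t : ℝ => M * (1 - t)) (𝓝[<] 1) (𝓝 0) :=
    ((by fun_prop : Continuous fun t : ℝ => M * (1 - t)).tendsto' 1 0 (by simp)).mono_left
      nhdsWithin_le_nhds
  obtain ⟨t, hMt, hy₀t, ht1⟩ :=
    ((hbias.eventually (gt_mem_nhds hε)).and (Ioo_mem_nhdsLT hy₀.2)).exists
  have ht0 : 0 < t := hy₀.1.trans hy₀t
  obtain ⟨s, hts, hs1⟩ := exists_between ht1
  have hs0 : 0 < s := ht0.trans hts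
  obtain ⟨c, hc, hcF⟩ := hΩcomp.exists_pos_forall_le_of_continuousOn
    ((hNP2 s ⟨(hy₀t.trans hts).le, hs1.le⟩).mono hΩE')
    fun x hx => hFpos x (hΩE' hx) s ⟨hs0.le, hs1⟩
  have hrem := (tendsto_one_div_add_add_rpow_div hptop (div_pos ht0 hs0).le
    ((div_lt_one hs0).2 hts) (1 - t) c).const_mul M
  filter_upwards [hptop.eventually_ge_atTop 1, hrem.eventually (gt_mem_nhds hMt)] with n hp hsmall
  have hb0 : 0 ≤ M * (1 / p n + (1 - t) + (t / s) ^ p n / c) :=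
    mul_nonneg hM.le (add_nonneg (add_nonneg (by positivity) (by linarith))
      (div_nonneg (Real.rpow_nonneg (div_pos ht0 hs0).le _) hc.le))
  refine (Real.iSup_le (fun x : Ω => ?_) hb0).trans_lt hsmall
  have hxE := hΩE' x.2
  exact abs_mMom_div_mMom_sub_le (hgpos x hxE) (hgM x x.2) (hFmeas x hxE) (hF x hxE)
    (hFanti x hxE) hp ht0.le hts hs1.le hc (hcF x x.2)

theorem uniform_ratio_conditional_moments
    (d : ℕ) (hd : 0 < d)
    (E Ω : Set (Fin d → ℝ)) (hEclosed : IsClosed E)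
    (hΩcomp : IsCompact Ω) (hΩE : Ω ⊆ interior E)
    (p h : ℕ → ℝ) (hppos : ∀ n, 0 < p n) (hhpos : ∀ n, 0 < h n)
    (hptop : Tendsto p atTop atTop) (hh0 : Tendsto h atTop (nhds 0))
    (f g : (Fin d → ℝ) → ℝ) (ηg : ℝ) (hηg : 0 < ηg)
    (hfcont : ContinuousOn f E) (hfpos : ∀ x ∈ E, 0 < f x)
    (hgpos : ∀ x ∈ E, 0 < g x)
    (hgHolder : ∃ cg > 0, ∀ x ∈ E, ∀ y ∈ E, |g x - g y| ≤ cg * ‖x - y‖ ^ ηg)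
    (hph : Tendsto (fun n => p n * h n ^ ηg) atTop (nhds 0))
    (Fbar : ℝ → (Fin d → ℝ) → ℝ)
    (hFanti : ∀ x ∈ E, AntitoneOn (fun y => Fbar y x) (Icc (0:ℝ) 1))
    (hFnn : ∀ x ∈ E, ∀ y ∈ Icc (0:ℝ) 1, 0 ≤ Fbar y x)
    (hFone : ∀ x ∈ E, Fbar 0 x = 1)
    (hFpos : ∀ x ∈ E, ∀ y ∈ Ico (0:ℝ) 1, 0 < Fbar y x)
    (hFend : ∀ x ∈ E, ∀ y : ℝ, 1 ≤ y → Fbar y x = 0)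
    (hFmeas : ∀ x ∈ E, Measurable fun y => Fbar y x)
    (y₀ : ℝ) (hy₀ : y₀ ∈ Ioo (0:ℝ) 1)
    (hNP2 : ∀ y ∈ Icc y₀ 1, ContinuousOn (fun x => Fbar y x) E)
    :
    Tendsto (fun n => ⨆ x : Ω,
      |mMom d g Fbar (p n + 1) (x : Fin d → ℝ) / mMom d g Fbar (p n) (x : Fin d → ℝ) -
        g (x : Fin d → ℝ)|) atTop (nhds 0) :=
  uniform_ratio_conditional_moments_general d E Ω hΩcomp hΩE p hptop g ηg hηg hgpos hgHolder Fbar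
    hFanti hFnn hFone hFpos hFmeas y₀ hy₀ hNP2
end
end

section
/- Assume conditions (K), (A1) and (A2) hold. For x ∈ Ω, u ∈ B and n ≥ 1, set 𝓛_n(p_n, x, u) = [ (fC)(x−h_n u) Γ(α(x−h_n u)+1) / ( (fC)(x) Γ(α(x)+1) ) ] · exp[ p_n Δ_n^g(x,u)/g(x) − log(p_n) Δ_n^α(x,u) ] and Λ_n(p_n, x) = M_n(p_n, x) / ( f(x) C(x) g^{p_n}(x) ). If p_n → ∞ and p_n h_n^{η_g} → 0, then (i) sup_{x∈Ω} | Λ_n(p_n, x) / ( α(x) b(p_n+1, α(x)) ) − 1 | → 0 as n → ∞, and (ii) sup_{x∈Ω} | Λ_n(p_n, x) / ( α(x) b(p_n+1, α(x)) ) − ∫_B 𝓛_n(p_n, x, u) K(u) du | = O( h_n^{η_g} ∨ p_n^{−1} h_n^{η_α} ). -/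
/-! Put `w = f C Γ(α + 1)`, `y = x - h u` and `t = (g y - g x) / g x`. By
`b(p, a) = Γ(p) Γ(a) / Γ(p + a)`, the normalised integrand of `M_n` is
`w y / w x · exp (p log (1 + t) + log Γ(p + α x + 1) - log Γ(p + α y + 1))`, while `𝓛_n` is
`w y / w x · exp (p t + (α x - α y) log p)`. Hölder continuity gives `t = O(h^{η_g})` and
`α y - α x = O(h^{η_α})` uniformly on a compact neighbourhood of `Ω` in `E`. Since `p t → 0`,
`p log (1 + t) = p t + O(p t²) = p t + O(h^{η_g})`, and convexity of `log Γ` pins its slope on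
`[p + α y + 1, p + α x + 1]` between `log p` and `log p + O(1 / p)`. As both exponents stay
bounded, their difference `O(h^{η_g} ∨ p⁻¹ h^{η_α})` gives (ii). Part (i) then follows from
`𝓛_n → 1` uniformly, by uniform continuity of `w` and `p h^{η_g} → 0`, `log p · h^{η_α} → 0`. -/

open MeasureTheory Filter Set Metric ProbabilityTheory

noncomputable section

/-- The Beta function `b(x,y) = ∫_0^1 t^{x-1} (1-t)^{y-1} dt`. -/
def betaFn (x y : ℝ) : ℝ := ∫ t in (0:ℝ)..1, t ^ (x - 1) * (1 - t) ^ (y - 1)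

/-- `M_n(p,x) = ∫_B (fCg^p)(x - h u) · p · b(p, α(x - h u) + 1) K(u) du`. -/
def Mn (d : ℕ) (f C g α : (Fin d → ℝ) → ℝ) (K : (Fin d → ℝ) → ℝ) (hn : ℝ)
    (q : ℝ) (x : Fin d → ℝ) : ℝ :=
  ∫ u in closedBall (0 : Fin d → ℝ) 1,
    f (x - hn • u) * C (x - hn • u) * g (x - hn • u) ^ q * q *
      betaFn q (α (x - hn • u) + 1) * K u

open Real Topology

lemma betaFn_eq_Gamma {u v : ℝ} (hu : 0 < u) (hv : 0 < v) :
    betaFn u v = Gamma u * Gamma v / Gamma (u + v) := by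
  have hbeta : Complex.betaIntegral u v = (betaFn u v : ℂ) := by
    rw [Complex.betaIntegral, betaFn, ← intervalIntegral.integral_ofReal]
    refine intervalIntegral.integral_congr fun t ht => ?_
    rw [uIcc_of_le zero_le_one] at ht
    push_cast
    rw [Complex.ofReal_cpow ht.1, Complex.ofReal_cpow (sub_nonneg.2 ht.2)]
    push_cast
    ring
  have key := Complex.Gamma_mul_Gamma_eq_betaIntegral (s := u) (t := v)
    (by simpa using hu) (by simpa using hv)
  rw [hbeta, ← Complex.ofReal_add, Complex.Gamma_ofReal, Complex.Gamma_ofReal,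
    Complex.Gamma_ofReal] at key
  rw [eq_div_iff (Gamma_pos_of_pos (add_pos hu hv)).ne', mul_comm]
  exact_mod_cast key.symm

lemma log_Gamma_sub_mem_Icc {x y : ℝ} (hx : 1 < x) (hxy : x ≤ y) :
    log (Gamma y) - log (Gamma x) ∈ Icc ((y - x) * log (x - 1)) ((y - x) * log y) := by
  rcases hxy.eq_or_lt with rfl | hlt
  · simp
  have step : ∀ z : ℝ, 0 < z → (log ∘ Gamma) (z + 1) - (log ∘ Gamma) z = log z := fun z hz => by
    simp only [Function.comp, Gamma_add_one hz.ne', log_mul hz.ne' (Gamma_pos_of_pos hz).ne']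
    ring
  have hyx : 0 < y - x := sub_pos.2 hlt
  have lower := convexOn_log_Gamma.slope_mono_adjacent (x := x - 1) (y := x) (z := y)
    (by simp only [mem_Ioi]; linarith) (by simp only [mem_Ioi]; linarith) (by linarith) hlt
  have upper := convexOn_log_Gamma.slope_mono_adjacent (x := x) (y := y) (z := y + 1)
    (by simp only [mem_Ioi]; linarith) (by simp only [mem_Ioi]; linarith) hlt (by linarith)
  have h1 := step (x - 1) (by linarith)
  rw [sub_add_cancel] at h1
  rw [h1, sub_sub_cancel, div_one, le_div_iff₀ hyx] at lower
  rw [step y (by linarith), add_sub_cancel_left, div_one, div_le_iff₀ hyx] at upper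
  exact ⟨by simpa [mul_comm] using lower, by simpa [mul_comm] using upper⟩

lemma abs_log_Gamma_sub_sub_mul_log_le {P a b A : ℝ} (hP : 1 ≤ P) (ha : 0 < a) (hb : 0 < b)
    (haA : a ≤ A) (hbA : b ≤ A) :
    |log (Gamma (P + a + 1)) - log (Gamma (P + b + 1)) - (a - b) * log P| ≤
      (A + 1) * |a - b| / P := by
  wlog hba : b ≤ a generalizing a b
  · rw [← abs_neg, abs_sub_comm]
    convert this hb ha hbA haA (le_of_not_ge hba) using 2
    ring
  have hP0 : 0 < P := by linarith
  obtain ⟨lower, upper⟩ := log_Gamma_sub_mem_Icc (x := P + b + 1) (y := P + a + 1)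
    (by linarith) (by linarith)
  rw [show P + a + 1 - (P + b + 1) = a - b by ring] at lower upper
  rw [add_sub_cancel_right] at lower
  have hab : 0 ≤ a - b := sub_nonneg.2 hba
  have hlogP : log P ≤ log (P + b) := log_le_log hP0 (by linarith)
  have hlog : log (P + a + 1) - log P ≤ (A + 1) / P := by
    rw [← log_div (by linarith) hP0.ne']
    refine (log_le_sub_one_of_pos (by positivity)).trans ?_
    rw [div_sub_one hP0.ne']
    gcongr
    linarith
  rw [abs_of_nonneg hab, abs_of_nonneg (by nlinarith)]
  calc _ ≤ (a - b) * (log (P + a + 1) - log P) := by linarith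
    _ ≤ (a - b) * ((A + 1) / P) := mul_le_mul_of_nonneg_left hlog hab
    _ = (A + 1) * (a - b) / P := by ring

lemma abs_exp_sub_exp_le {s r : ℝ} (h : |s - r| ≤ 1) :
    |exp s - exp r| ≤ 2 * exp r * |s - r| := by
  rw [show exp s - exp r = exp r * (exp (s - r) - 1) by rw [mul_sub, ← exp_add]; ring_nf,
    abs_mul, abs_of_pos (exp_pos r), mul_comm 2, mul_assoc]
  exact mul_le_mul_of_nonneg_left (abs_exp_sub_one_le h) (exp_pos r).le

lemma abs_mul_exp_sub_one_le {a r : ℝ} (hr : |r| ≤ 1) :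
    |a * exp r - 1| ≤ |a - 1| * exp 1 + 2 * |r| := by
  calc |a * exp r - 1| = |(a - 1) * exp r + (exp r - 1)| := by ring_nf
    _ ≤ |a - 1| * exp r + |exp r - 1| := by
      rw [← abs_of_pos (exp_pos r), ← abs_mul, abs_of_pos (exp_pos r)]
      exact abs_add_le _ _
    _ ≤ |a - 1| * exp 1 + 2 * |r| := by
      gcongr
      · exact (le_abs_self r).trans hr
      · exact abs_exp_sub_one_le hr

lemma abs_log_one_add_sub_le {t : ℝ} (ht : |t| ≤ 1 / 2) : |log (1 + t) - t| ≤ 2 * t ^ 2 := by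
  have key := abs_log_sub_add_sum_range_le (x := -t) (by rw [abs_neg]; linarith) 1
  simp only [Finset.range_one, Finset.sum_singleton, abs_neg, sub_neg_eq_add] at key
  calc |log (1 + t) - t| = |-t ^ (0 + 1) / (0 + 1) + log (1 + t)| := by ring_nf
    _ ≤ |t| ^ (1 + 1) / (1 - |t|) := by simpa using key
    _ ≤ 2 * t ^ 2 := by
      rw [div_le_iff₀ (by linarith), sq_abs]
      nlinarith [sq_nonneg t]

lemma abs_rpow_mul_Gamma_div_sub_exp_le {P t a b A : ℝ} (hP : 1 ≤ P) (ha : 0 < a) (hb : 0 < b)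
    (haA : a ≤ A) (hbA : b ≤ A) (ht : P * |t| ≤ 1 / 2) (hlog : log P * |b - a| ≤ 1 / 2)
    (hab : (A + 1) * |a - b| / P ≤ 1 / 2) :
    |(1 + t) ^ P * (Gamma (P + a + 1) / Gamma (P + b + 1)) - exp (P * t - log P * (b - a))| ≤
      2 * exp 1 * (|t| + (A + 1) * |a - b| / P) := by
  have ht' : |t| ≤ 1 / 2 := le_trans (le_mul_of_one_le_left (abs_nonneg t) hP) ht
  have h1t : 0 < 1 + t := by linarith [neg_abs_le t]
  set D := log (Gamma (P + a + 1)) - log (Gamma (P + b + 1))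
  set r := P * t - log P * (b - a) with hr_def
  have hexact : (1 + t) ^ P * (Gamma (P + a + 1) / Gamma (P + b + 1)) =
      exp (P * log (1 + t) + D) := by
    rw [exp_add, exp_sub, exp_log (Gamma_pos_of_pos (by linarith)),
      exp_log (Gamma_pos_of_pos (by linarith)), rpow_def_of_pos h1t, mul_comm P]
  have hsr : |P * log (1 + t) + D - r| ≤ |t| + (A + 1) * |a - b| / P := by
    have hlog1 : |P * (log (1 + t) - t)| ≤ |t| := by
      rw [abs_mul, abs_of_pos (by linarith : 0 < P)]
      calc P * |log (1 + t) - t| ≤ P * (2 * t ^ 2) := by gcongr; exact abs_log_one_add_sub_le ht'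
        _ = 2 * (P * |t|) * |t| := by rw [← sq_abs]; ring
        _ ≤ |t| := by nlinarith [abs_nonneg t]
    calc |P * log (1 + t) + D - r| = |P * (log (1 + t) - t) + (D - (a - b) * log P)| := by
          rw [hr_def]; ring_nf
      _ ≤ _ := (abs_add_le _ _).trans
        (add_le_add hlog1 (abs_log_Gamma_sub_sub_mul_log_le hP ha hb haA hbA))
  have hr : r ≤ 1 := calc
    r ≤ |P * t| + |log P * (b - a)| := (le_abs_self r).trans (abs_sub _ _)
    _ ≤ 1 / 2 + 1 / 2 := by
      rw [abs_mul, abs_mul, abs_of_pos (by linarith : 0 < P), abs_of_nonneg (log_nonneg hP)]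
      exact add_le_add ht hlog
    _ = 1 := by norm_num
  rw [hexact]
  calc _ ≤ 2 * exp r * |P * log (1 + t) + D - r| := abs_exp_sub_exp_le (by linarith)
    _ ≤ 2 * exp 1 * (|t| + (A + 1) * |a - b| / P) := by gcongr

lemma tendsto_log_mul_rpow_nhds_zero {ι : Type*} {l : Filter ι} {p h : ι → ℝ} {η η' : ℝ}
    (hp : Tendsto p l atTop) (hh : ∀ i, 0 ≤ h i) (hph : Tendsto (fun i => p i * h i ^ η) l (𝓝 0))
    (hη : 0 < η) (hη' : 0 < η') :
    Tendsto (fun i => log (p i) * h i ^ η') l (𝓝 0) := by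
  have hq : 0 < η' / η := div_pos hη' hη
  have hlog : Tendsto (fun x : ℝ => log x * x ^ (-(η' / η))) atTop (𝓝 0) := by
    refine (isLittleO_log_rpow_atTop hq).tendsto_div_nhds_zero.congr' ?_
    filter_upwards [eventually_gt_atTop 0] with x hx
    rw [rpow_neg hx.le, div_eq_mul_inv]
  have hlim : Tendsto (fun i => log (p i) * p i ^ (-(η' / η))) l (𝓝 0) := hlog.comp hp
  refine squeeze_zero' ?_ ?_ hlim
  · filter_upwards [hp.eventually_ge_atTop 1] with i hi
    exact mul_nonneg (log_nonneg hi) (rpow_nonneg (hh i) _)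
  · filter_upwards [hp.eventually_gt_atTop 0, hp.eventually_ge_atTop 1,
      hph.eventually_le_const one_pos] with i hp0 hp1 hph1
    gcongr
    · exact log_nonneg hp1
    calc h i ^ η' = (h i ^ η) ^ (η' / η) := by
          rw [← rpow_mul (hh i), mul_div_cancel₀ _ hη.ne']
      _ ≤ (p i)⁻¹ ^ (η' / η) := by
          gcongr
          · exact rpow_nonneg (hh i) η
          · rwa [← one_div, le_div_iff₀ hp0, mul_comm]
      _ = p i ^ (-(η' / η)) := by rw [inv_rpow hp0.le, rpow_neg hp0.le]

lemma tendsto_max_rpow_inv_mul_rpow {ι : Type*} {l : Filter ι} {p h : ι → ℝ} {η η' : ℝ}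
    (hp : Tendsto p l atTop) (hh0 : Tendsto h l (𝓝 0)) (hη : 0 < η) (hη' : 0 < η') :
    Tendsto (fun i => max (h i ^ η) ((p i)⁻¹ * h i ^ η')) l (𝓝 0) := by
  have hrpow : ∀ {η : ℝ}, 0 < η → Tendsto (fun i => h i ^ η) l (𝓝 0) := fun hη => by
    simpa [zero_rpow hη.ne'] using hh0.rpow_const (Or.inr hη.le)
  simpa using (hrpow hη).max (hp.inv_tendsto_atTop.mul (hrpow hη'))

lemma tendsto_iSup_abs_nhds_zero {ι κ : Type*} {l : Filter ι} {F : ι → κ → ℝ}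
    (hF : ∀ ε > 0, ∀ᶠ i in l, ∀ k, |F i k| ≤ ε) : Tendsto (fun i => ⨆ k, |F i k|) l (𝓝 0) := by
  refine Metric.tendsto_nhds.2 fun ε hε => (hF (ε / 2) (half_pos hε)).mono fun i hi => ?_
  rw [Real.dist_eq, sub_zero, abs_of_nonneg (Real.iSup_nonneg fun k => abs_nonneg _)]
  exact (Real.iSup_le hi (half_pos hε).le).trans_lt (half_lt_self hε)

section Ratios

variable {X : Type*}

def gammaWeight (f C α : X → ℝ) (y : X) : ℝ := f y * C y * Gamma (α y + 1)

/-- With `w = gammaWeight f C α` and `y = x - h u`, `∫_B gammaRatio w g α P x y K(u) du` is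
`Λ_n(P, x) / (α(x) b(P + 1, α(x)))` and `expRatio w g α P x y` is `𝓛_n(P, x, u)`. -/
def gammaRatio (w g α : X → ℝ) (P : ℝ) (x y : X) : ℝ :=
  w y / w x * ((g y / g x) ^ P * (Gamma (P + α x + 1) / Gamma (P + α y + 1)))

def expRatio (w g α : X → ℝ) (P : ℝ) (x y : X) : ℝ :=
  w y / w x * exp (P * ((g y - g x) / g x) - log P * (α y - α x))

lemma gammaWeight_pos {f C α : X → ℝ} {y : X} (hf : 0 < f y) (hC : 0 < C y) (hα : 0 < α y) :
    0 < gammaWeight f C α y := by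
  unfold gammaWeight
  have := Gamma_pos_of_pos (by linarith : 0 < α y + 1)
  positivity

lemma integrand_div_eq_gammaRatio {f C g α : X → ℝ} {P : ℝ} {x y : X} (k : ℝ) (hP : 0 < P)
    (hfx : 0 < f x) (hCx : 0 < C x) (hgx : 0 < g x) (hgy : 0 < g y) (hαx : 0 < α x)
    (hαy : 0 < α y) :
    f y * C y * g y ^ P * P * betaFn P (α y + 1) * k /
        (f x * C x * g x ^ P * (α x * betaFn (P + 1) (α x))) =
      gammaRatio (gammaWeight f C α) g α P x y * k := by
  rw [betaFn_eq_Gamma hP (by linarith), betaFn_eq_Gamma (by linarith) hαx,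
    Gamma_add_one hP.ne', ← add_assoc, add_right_comm P 1, gammaRatio, gammaWeight, gammaWeight,
    Gamma_add_one hαx.ne', div_rpow hgy.le hgx.le]
  have := Gamma_pos_of_pos hP
  have := Gamma_pos_of_pos hαx
  have := Gamma_pos_of_pos (by linarith : 0 < P + α x + 1)
  have := Gamma_pos_of_pos (by linarith : 0 < P + α y + 1)
  have := Gamma_pos_of_pos (by linarith : 0 < α y + 1)
  have := rpow_pos_of_pos hgx P
  field_simp

end Ratios

section Continuity

variable {V : Type*} [NormedAddCommGroup V] {S : Set V}

lemma continuousOn_of_abs_sub_le_mul_rpow {γ : V → ℝ} {c η : ℝ} (hη : 0 < η)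
    (hγ : ∀ x ∈ S, ∀ y ∈ S, |γ x - γ y| ≤ c * ‖x - y‖ ^ η) : ContinuousOn γ S := by
  intro x hx
  rw [ContinuousWithinAt, tendsto_iff_norm_sub_tendsto_zero]
  have hlim : Tendsto (fun y => c * ‖y - x‖ ^ η) (𝓝[S] x) (𝓝 0) := by
    have hcont : Continuous fun y : V => c * ‖y - x‖ ^ η :=
      continuous_const.mul ((continuous_id.sub continuous_const).norm.rpow_const
        fun _ => Or.inr hη.le)
    have := hcont.tendsto x
    rw [sub_self, norm_zero, zero_rpow hη.ne', mul_zero] at this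
    exact this.mono_left nhdsWithin_le_nhds
  exact squeeze_zero' (Eventually.of_forall fun _ => norm_nonneg _)
    (eventually_nhdsWithin_of_forall fun y hy => hγ y hy x hx) hlim

lemma abs_sub_le_mul_rpow_of_norm_sub_le {γ : V → ℝ} {c η r : ℝ}
    (hγ : ∀ x ∈ S, ∀ y ∈ S, |γ x - γ y| ≤ c * ‖x - y‖ ^ η) (hc : 0 ≤ c) (hη : 0 ≤ η)
    {x y : V} (hx : x ∈ S) (hy : y ∈ S) (hxy : ‖x - y‖ ≤ r) : |γ y - γ x| ≤ c * r ^ η := by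
  rw [abs_sub_comm]
  exact (hγ x hx y hy).trans (by gcongr)

lemma abs_sub_div_le_mul_rpow_of_norm_sub_le {γ : V → ℝ} {c η r m : ℝ}
    (hγ : ∀ x ∈ S, ∀ y ∈ S, |γ x - γ y| ≤ c * ‖x - y‖ ^ η) (hc : 0 ≤ c) (hη : 0 ≤ η)
    (hm : 0 < m) {x y : V} (hx : x ∈ S) (hy : y ∈ S) (hmx : m ≤ γ x) (hxy : ‖x - y‖ ≤ r) :
    |(γ y - γ x) / γ x| ≤ c / m * r ^ η := by
  rw [abs_div, abs_of_pos (hm.trans_le hmx), div_mul_eq_mul_div]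
  exact div_le_div₀ (mul_nonneg hc (rpow_nonneg ((norm_nonneg _).trans hxy) _))
    (abs_sub_le_mul_rpow_of_norm_sub_le hγ hc hη hx hy hxy) hm hmx

lemma IsCompact.exists_forall_mem_Icc_of_pos {F : V → ℝ} (hS : IsCompact S)
    (hF : ContinuousOn F S) (hpos : ∀ y ∈ S, 0 < F y) :
    ∃ m M, 0 < m ∧ m ≤ M ∧ ∀ y ∈ S, F y ∈ Icc m M := by
  rcases S.eq_empty_or_nonempty with rfl | hne
  · exact ⟨1, 1, one_pos, le_rfl, by simp⟩
  obtain ⟨y₁, hy₁, hmin⟩ := hS.exists_isMinOn hne hF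
  obtain ⟨y₂, hy₂, hmax⟩ := hS.exists_isMaxOn hne hF
  exact ⟨F y₁, F y₂, hpos y₁ hy₁, hmin hy₂, fun y hy => ⟨hmin hy, hmax hy⟩⟩

lemma continuousOn_Gamma_comp {φ : V → ℝ} (hφ : ContinuousOn φ S) (hpos : ∀ y ∈ S, 0 < φ y) :
    ContinuousOn (fun y => Gamma (φ y)) S := fun y hy =>
  (differentiableAt_Gamma fun m =>
    ((neg_nonpos.2 m.cast_nonneg).trans_lt (hpos y hy)).ne').continuousAt.comp_continuousWithinAt
    (hφ y hy)

lemma continuousOn_gammaWeight {f C α : V → ℝ} (hf : ContinuousOn f S) (hC : ContinuousOn C S)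
    (hα : ContinuousOn α S) (hαpos : ∀ y ∈ S, 0 < α y) :
    ContinuousOn (gammaWeight f C α) S :=
  (hf.mul hC).mul (continuousOn_Gamma_comp (hα.add continuousOn_const) fun y hy => by
    linarith [hαpos y hy])

lemma continuousOn_gammaRatio {w g α : V → ℝ} {P : ℝ} (x : V) (hP : 0 ≤ P)
    (hw : ContinuousOn w S) (hg : ContinuousOn g S) (hα : ContinuousOn α S)
    (hαpos : ∀ y ∈ S, 0 < α y) : ContinuousOn (gammaRatio w g α P x) S := by
  have hΓ := continuousOn_Gamma_comp (φ := fun y => P + α y + 1)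
    ((continuousOn_const.add hα).add continuousOn_const) fun y hy => by linarith [hαpos y hy]
  refine (hw.div_const _).mul (((hg.div_const _).rpow_const fun _ _ => Or.inr hP).mul
    (continuousOn_const.div hΓ fun y hy => ?_))
  exact (Gamma_pos_of_pos (by linarith [hαpos y hy])).ne'

lemma continuousOn_expRatio {w g α : V → ℝ} {P : ℝ} (x : V) (hw : ContinuousOn w S)
    (hg : ContinuousOn g S) (hα : ContinuousOn α S) : ContinuousOn (expRatio w g α P x) S :=
  (hw.div_const _).mul (continuous_exp.comp_continuousOn
    ((continuousOn_const.mul ((hg.sub continuousOn_const).div_const _)).sub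
      (continuousOn_const.mul (hα.sub continuousOn_const))))

end Continuity

section Asymptotics

variable {V ι : Type*} [NormedAddCommGroup V] {S : Set V} {w g α : V → ℝ} {cg cα ηg ηα : ℝ}
  {l : Filter ι} {p h : ι → ℝ}

theorem exists_eventually_abs_gammaRatio_sub_expRatio_le (hS : IsCompact S)
    (hw : ContinuousOn w S) (hwpos : ∀ y ∈ S, 0 < w y) (hgpos : ∀ y ∈ S, 0 < g y)
    (hgH : ∀ x ∈ S, ∀ y ∈ S, |g x - g y| ≤ cg * ‖x - y‖ ^ ηg) (hcg : 0 ≤ cg) (hηg : 0 < ηg)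
    (hαpos : ∀ y ∈ S, 0 < α y)
    (hαH : ∀ x ∈ S, ∀ y ∈ S, |α x - α y| ≤ cα * ‖x - y‖ ^ ηα) (hcα : 0 ≤ cα) (hηα : 0 < ηα)
    (hp : Tendsto p l atTop) (hh0 : Tendsto h l (𝓝 0)) (hh : ∀ i, 0 ≤ h i)
    (hph : Tendsto (fun i => p i * h i ^ ηg) l (𝓝 0)) :
    ∃ M, 0 ≤ M ∧ ∀ᶠ i in l, ∀ x ∈ S, ∀ y ∈ S, ‖x - y‖ ≤ h i →
      |gammaRatio w g α (p i) x y - expRatio w g α (p i) x y| ≤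
        M * max (h i ^ ηg) ((p i)⁻¹ * h i ^ ηα) := by
  obtain ⟨w₁, w₂, hw₁, hw₁₂, hwS⟩ := hS.exists_forall_mem_Icc_of_pos hw hwpos
  obtain ⟨g₁, _, hg₁, _, hgS⟩ :=
    hS.exists_forall_mem_Icc_of_pos (continuousOn_of_abs_sub_le_mul_rpow hηg hgH) hgpos
  obtain ⟨a₁, A, ha₁, ha₁A, hαS⟩ :=
    hS.exists_forall_mem_Icc_of_pos (continuousOn_of_abs_sub_le_mul_rpow hηα hαH) hαpos
  have small : ∀ {u : ι → ℝ} (c : ℝ), Tendsto u l (𝓝 0) → ∀ᶠ i in l, c * u i ≤ 1 / 2 :=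
    fun c hu => (hu.const_mul c).eventually_le_const (by rw [mul_zero]; norm_num)
  have hw₂ : 0 < w₂ := hw₁.trans_le hw₁₂
  have hA : 0 < A := ha₁.trans_le ha₁A
  refine ⟨w₂ / w₁ * (2 * exp 1) * (cg / g₁ + (A + 1) * cα), by positivity, ?_⟩
  filter_upwards [hp.eventually_ge_atTop 1, small (cg / g₁) hph,
    small cα (tendsto_log_mul_rpow_nhds_zero hp hh hph hηg hηα),
    small ((A + 1) * cα) (tendsto_max_rpow_inv_mul_rpow hp hh0 hηg hηα)]
    with i hP hgsmall hαsmall hEsmall x hx y hy hxy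
  set E := max (h i ^ ηg) ((p i)⁻¹ * h i ^ ηα)
  have hP₀ : 0 < p i := by linarith
  have ht := abs_sub_div_le_mul_rpow_of_norm_sub_le hgH hcg hηg.le hg₁ hx hy (hgS x hx).1 hxy
  have hΔ := abs_sub_le_mul_rpow_of_norm_sub_le hαH hcα hηα.le hx hy hxy
  have hΔ' : (A + 1) * |α x - α y| / p i ≤ (A + 1) * cα * E := by
    rw [abs_sub_comm, mul_div_assoc, mul_assoc]
    gcongr
    calc |α y - α x| / p i ≤ cα * h i ^ ηα / p i := by gcongr
      _ = cα * ((p i)⁻¹ * h i ^ ηα) := by ring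
      _ ≤ cα * E := by gcongr; exact le_max_right _ _
  have key := abs_rpow_mul_Gamma_div_sub_exp_le hP (hαpos x hx) (hαpos y hy) (hαS x hx).2
    (hαS y hy).2 (t := (g y - g x) / g x)
    (calc p i * |(g y - g x) / g x| ≤ p i * (cg / g₁ * h i ^ ηg) := by gcongr
      _ = cg / g₁ * (p i * h i ^ ηg) := by ring
      _ ≤ 1 / 2 := hgsmall)
    (calc log (p i) * |α y - α x| ≤ log (p i) * (cα * h i ^ ηα) :=
            mul_le_mul_of_nonneg_left hΔ (log_nonneg hP)
      _ ≤ 1 / 2 := by linarith)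
    (hΔ'.trans hEsmall)
  have hgxy : g y / g x = 1 + (g y - g x) / g x := by
    field_simp [(hgpos x hx).ne']; ring
  rw [gammaRatio, expRatio, ← mul_sub, abs_mul, abs_of_pos (div_pos (hwpos y hy) (hwpos x hx)),
    hgxy]
  calc _ ≤ w₂ / w₁ * (2 * exp 1 * (|(g y - g x) / g x| + (A + 1) * |α x - α y| / p i)) := by
        gcongr
        exacts [(hwS y hy).2, (hwS x hx).1]
    _ ≤ w₂ / w₁ * (2 * exp 1 * (cg / g₁ * E + (A + 1) * cα * E)) := by
        gcongr
        exact ht.trans (by gcongr; exact le_max_left _ _)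
    _ = w₂ / w₁ * (2 * exp 1) * (cg / g₁ + (A + 1) * cα) * E := by ring

theorem eventually_abs_expRatio_sub_one_le (hS : IsCompact S)
    (hw : ContinuousOn w S) (hwpos : ∀ y ∈ S, 0 < w y) (hgpos : ∀ y ∈ S, 0 < g y)
    (hgH : ∀ x ∈ S, ∀ y ∈ S, |g x - g y| ≤ cg * ‖x - y‖ ^ ηg) (hcg : 0 ≤ cg) (hηg : 0 < ηg)
    (hαH : ∀ x ∈ S, ∀ y ∈ S, |α x - α y| ≤ cα * ‖x - y‖ ^ ηα) (hcα : 0 ≤ cα) (hηα : 0 < ηα)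
    (hp : Tendsto p l atTop) (hh0 : Tendsto h l (𝓝 0)) (hh : ∀ i, 0 ≤ h i)
    (hph : Tendsto (fun i => p i * h i ^ ηg) l (𝓝 0)) {ε : ℝ} (hε : 0 < ε) :
    ∀ᶠ i in l, ∀ x ∈ S, ∀ y ∈ S, ‖x - y‖ ≤ h i → |expRatio w g α (p i) x y - 1| ≤ ε := by
  obtain ⟨w₁, _, hw₁, _, hwS⟩ := hS.exists_forall_mem_Icc_of_pos hw hwpos
  obtain ⟨g₁, _, hg₁, _, hgS⟩ :=
    hS.exists_forall_mem_Icc_of_pos (continuousOn_of_abs_sub_le_mul_rpow hηg hgH) hgpos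
  obtain ⟨δ, hδ, hwδ⟩ := Metric.uniformContinuousOn_iff.1
    (hS.uniformContinuousOn_of_continuous hw) (w₁ * ε / (2 * exp 1)) (by positivity)
  have hρ : Tendsto (fun i => cg / g₁ * (p i * h i ^ ηg) + cα * (log (p i) * h i ^ ηα)) l
      (𝓝 0) := by
    simpa using (hph.const_mul _).add
      ((tendsto_log_mul_rpow_nhds_zero hp hh hph hηg hηα).const_mul cα)
  filter_upwards [hp.eventually_ge_atTop 1, hh0.eventually_lt_const hδ,
    hρ.eventually_le_const (lt_min one_pos (by positivity : 0 < ε / 4))]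
    with i hP hhδ hρi x hx y hy hxy
  have hr : |p i * ((g y - g x) / g x) - log (p i) * (α y - α x)| ≤ min 1 (ε / 4) := by
    have hgt : p i * |(g y - g x) / g x| ≤ cg / g₁ * (p i * h i ^ ηg) := by
      rw [mul_left_comm]
      gcongr
      exact abs_sub_div_le_mul_rpow_of_norm_sub_le hgH hcg hηg.le hg₁ hx hy (hgS x hx).1 hxy
    have hαt : log (p i) * |α y - α x| ≤ cα * (log (p i) * h i ^ ηα) := by
      rw [mul_left_comm]
      exact mul_le_mul_of_nonneg_left (abs_sub_le_mul_rpow_of_norm_sub_le hαH hcα hηα.le hx hy hxy)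
        (log_nonneg hP)
    refine (abs_sub _ _).trans (le_trans ?_ hρi)
    rw [abs_mul, abs_mul, abs_of_pos (by linarith : 0 < p i), abs_of_nonneg (log_nonneg hP)]
    linarith
  have hwx := hwpos x hx
  have hwxy : |w y / w x - 1| ≤ ε / (2 * exp 1) := by
    rw [div_sub_one hwx.ne', abs_div, abs_of_pos hwx, div_le_iff₀ hwx]
    have := (hwδ x hx y hy (by rw [dist_eq_norm]; linarith)).le
    rw [Real.dist_eq, abs_sub_comm] at this
    calc |w y - w x| ≤ w₁ * ε / (2 * exp 1) := this
      _ ≤ ε / (2 * exp 1) * w x := by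
        rw [mul_div_assoc, mul_comm]
        gcongr
        exact (hwS x hx).1
  calc |expRatio w g α (p i) x y - 1|
      ≤ |w y / w x - 1| * exp 1 + 2 * |p i * ((g y - g x) / g x) - log (p i) * (α y - α x)| :=
        abs_mul_exp_sub_one_le (hr.trans (min_le_left _ _))
    _ ≤ ε / (2 * exp 1) * exp 1 + 2 * (ε / 4) := by
        gcongr
        exact hr.trans (min_le_right _ _)
    _ = ε := by field_simp; ring

theorem eventually_abs_gammaRatio_sub_one_le (hS : IsCompact S)
    (hw : ContinuousOn w S) (hwpos : ∀ y ∈ S, 0 < w y) (hgpos : ∀ y ∈ S, 0 < g y)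
    (hgH : ∀ x ∈ S, ∀ y ∈ S, |g x - g y| ≤ cg * ‖x - y‖ ^ ηg) (hcg : 0 ≤ cg) (hηg : 0 < ηg)
    (hαpos : ∀ y ∈ S, 0 < α y)
    (hαH : ∀ x ∈ S, ∀ y ∈ S, |α x - α y| ≤ cα * ‖x - y‖ ^ ηα) (hcα : 0 ≤ cα) (hηα : 0 < ηα)
    (hp : Tendsto p l atTop) (hh0 : Tendsto h l (𝓝 0)) (hh : ∀ i, 0 ≤ h i)
    (hph : Tendsto (fun i => p i * h i ^ ηg) l (𝓝 0)) {ε : ℝ} (hε : 0 < ε) :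
    ∀ᶠ i in l, ∀ x ∈ S, ∀ y ∈ S, ‖x - y‖ ≤ h i → |gammaRatio w g α (p i) x y - 1| ≤ ε := by
  obtain ⟨M, -, hM⟩ := exists_eventually_abs_gammaRatio_sub_expRatio_le hS hw hwpos hgpos hgH hcg
    hηg hαpos hαH hcα hηα hp hh0 hh hph
  filter_upwards [hM, eventually_abs_expRatio_sub_one_le hS hw hwpos hgpos hgH hcg hηg hαH hcα
      hηα hp hh0 hh hph (half_pos hε),
    ((tendsto_max_rpow_inv_mul_rpow hp hh0 hηg hηα).const_mul M).eventually_le_const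
      (by rw [mul_zero]; exact half_pos hε : M * 0 < ε / 2)] with i h₁ h₂ h₃ x hx y hy hxy
  calc |gammaRatio w g α (p i) x y - 1|
      ≤ |gammaRatio w g α (p i) x y - expRatio w g α (p i) x y| +
        |expRatio w g α (p i) x y - 1| := abs_sub_le _ _ _
    _ ≤ ε / 2 + ε / 2 := add_le_add ((h₁ x hx y hy hxy).trans h₃) (h₂ x hx y hy hxy)
    _ = ε := add_halves ε

end Asymptotics

lemma norm_sub_sub_smul_le {V : Type*} [NormedAddCommGroup V] [NormedSpace ℝ V] {h : ℝ}
    (hh : 0 ≤ h) (x : V) {u : V} (hu : u ∈ closedBall 0 1) :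
    ‖x - (x - h • u)‖ ≤ h := by
  rw [sub_sub_cancel, norm_smul, Real.norm_of_nonneg hh]
  exact mul_le_of_le_one_right hh (mem_closedBall_zero_iff.1 hu)

lemma sub_smul_mem_cthickening {V : Type*} [NormedAddCommGroup V] [NormedSpace ℝ V] {Ω : Set V}
    {x u : V} {h δ : ℝ} (hx : x ∈ Ω) (hh : 0 ≤ h) (hhδ : h ≤ δ) (hu : u ∈ closedBall 0 1) :
    x - h • u ∈ cthickening δ Ω :=
  mem_cthickening_of_dist_le _ x δ Ω hx
    (by rw [dist_comm, dist_eq_norm]; exact (norm_sub_sub_smul_le hh x hu).trans hhδ)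

lemma integrableOn_and_setIntegral_eq_one {X : Type*} [MeasurableSpace X] {μ : Measure X}
    {K : X → ℝ} {s : Set X} (hK : ∫ u, K u ∂μ = 1) (hKs : Function.support K ⊆ s) :
    IntegrableOn K s μ ∧ ∫ u in s, K u ∂μ = 1 :=
  ⟨(Integrable.of_integral_ne_zero (by rw [hK]; exact one_ne_zero)).integrableOn, by
    rw [setIntegral_eq_integral_of_forall_compl_eq_zero fun u hu =>
      Function.notMem_support.1 fun hKu => hu (hKs hKu), hK]⟩

section Integrals

variable {V : Type*} [NormedAddCommGroup V] [NormedSpace ℝ V] [ProperSpace V]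
  [MeasurableSpace V] [BorelSpace V] {μ : Measure V}

lemma abs_setIntegral_sub_setIntegral_le {S : Set V} {F G K : V → ℝ} {x : V} {h ε : ℝ}
    (hh : 0 ≤ h) (hF : ContinuousOn F S) (hG : ContinuousOn G S)
    (hxS : ∀ u ∈ closedBall (0 : V) 1, x - h • u ∈ S)
    (hK : IntegrableOn K (closedBall 0 1) μ) (hK0 : ∀ u, 0 ≤ K u)
    (hK1 : ∫ u in closedBall (0 : V) 1, K u ∂μ = 1)
    (hFG : ∀ y ∈ S, ‖x - y‖ ≤ h → |F y - G y| ≤ ε) :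
    |∫ u in closedBall (0 : V) 1, F (x - h • u) * K u ∂μ -
        ∫ u in closedBall (0 : V) 1, G (x - h • u) * K u ∂μ| ≤ ε := by
  have hint : ∀ Φ : V → ℝ, ContinuousOn Φ S →
      IntegrableOn (fun u => Φ (x - h • u) * K u) (closedBall 0 1) μ := fun Φ hΦ =>
    hK.continuousOn_mul (hΦ.comp (by fun_prop) hxS) (isCompact_closedBall 0 1)
  rw [← integral_sub (hint F hF) (hint G hG), ← Real.norm_eq_abs]
  calc _ ≤ ∫ u in closedBall (0 : V) 1, ε * K u ∂μ := by
        refine norm_integral_le_of_norm_le (hK.const_mul ε)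
          (ae_restrict_of_forall_mem measurableSet_closedBall fun u hu => ?_)
        rw [← sub_mul, norm_mul, Real.norm_of_nonneg (hK0 u), Real.norm_eq_abs]
        exact mul_le_mul_of_nonneg_right
          (hFG _ (hxS u hu) (norm_sub_sub_smul_le hh x hu)) (hK0 u)
    _ = ε := by rw [integral_const_mul, hK1, mul_one]

end Integrals

lemma Mn_div_eq_setIntegral_gammaRatio {d : ℕ} {f C g α K : (Fin d → ℝ) → ℝ}
    {S : Set (Fin d → ℝ)} {h P : ℝ} {x : Fin d → ℝ} (hP : 0 < P) (hfx : 0 < f x)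
    (hCx : 0 < C x) (hg : ∀ y ∈ S, 0 < g y) (hα : ∀ y ∈ S, 0 < α y)
    (hxS : ∀ u ∈ closedBall (0 : Fin d → ℝ) 1, x - h • u ∈ S) :
    Mn d f C g α K h P x / (f x * C x * g x ^ P) / (α x * betaFn (P + 1) (α x)) =
      ∫ u in closedBall (0 : Fin d → ℝ) 1,
        gammaRatio (gammaWeight f C α) g α P x (x - h • u) * K u := by
  have hx : x ∈ S := by simpa using hxS 0 (by simp)
  rw [Mn, div_div, ← integral_div]
  exact setIntegral_congr_fun measurableSet_closedBall fun u hu =>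
    integrand_div_eq_gammaRatio _ hP hfx hCx (hg x hx) (hg _ (hxS u hu)) (hα x hx) (hα _ (hxS u hu))

lemma abs_Mn_div_sub_setIntegral_le {d : ℕ} {f C g α K G : (Fin d → ℝ) → ℝ}
    {S : Set (Fin d → ℝ)} {h P ε : ℝ} {x : Fin d → ℝ} (hh : 0 ≤ h) (hP : 0 < P)
    (hfx : 0 < f x) (hCx : 0 < C x) (hw : ContinuousOn (gammaWeight f C α) S)
    (hg : ContinuousOn g S) (hα : ContinuousOn α S) (hgpos : ∀ y ∈ S, 0 < g y)
    (hαpos : ∀ y ∈ S, 0 < α y) (hG : ContinuousOn G S)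
    (hxS : ∀ u ∈ closedBall (0 : Fin d → ℝ) 1, x - h • u ∈ S)
    (hK : IntegrableOn K (closedBall 0 1)) (hK0 : ∀ u, 0 ≤ K u)
    (hK1 : ∫ u in closedBall (0 : Fin d → ℝ) 1, K u = 1)
    (hGε : ∀ y ∈ S, ‖x - y‖ ≤ h → |gammaRatio (gammaWeight f C α) g α P x y - G y| ≤ ε) :
    |Mn d f C g α K h P x / (f x * C x * g x ^ P) / (α x * betaFn (P + 1) (α x)) -
      ∫ u in closedBall (0 : Fin d → ℝ) 1, G (x - h • u) * K u| ≤ ε := by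
  rw [Mn_div_eq_setIntegral_gammaRatio hP hfx hCx hgpos hαpos hxS]
  exact abs_setIntegral_sub_setIntegral_le hh (continuousOn_gammaRatio _ hP.le hw hg hα hαpos) hG
    hxS hK hK0 hK1 hGε

theorem uniform_expansion_Mn_general
    (d : ℕ)
    (E Ω : Set (Fin d → ℝ))
    (hΩcomp : IsCompact Ω) (hΩE : Ω ⊆ interior E)
    (p h : ℕ → ℝ) (hhpos : ∀ n, 0 < h n)
    (hptop : Tendsto p atTop atTop) (hh0 : Tendsto h atTop (nhds 0))
    (f g : (Fin d → ℝ) → ℝ) (ηg : ℝ) (hηg : 0 < ηg)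
    (hfcont : ContinuousOn f E) (hfpos : ∀ x ∈ E, 0 < f x)
    (hgpos : ∀ x ∈ E, 0 < g x)
    (hgHolder : ∃ cg > 0, ∀ x ∈ E, ∀ y ∈ E, |g x - g y| ≤ cg * ‖x - y‖ ^ ηg)
    (hph : Tendsto (fun n => p n * h n ^ ηg) atTop (nhds 0))
    (α C : (Fin d → ℝ) → ℝ) (ηα : ℝ) (hηα : 0 < ηα)
    (hαpos : ∀ x ∈ E, 0 < α x)
    (hαHolder : ∃ cα > 0, ∀ x ∈ E, ∀ y ∈ E, |α x - α y| ≤ cα * ‖x - y‖ ^ ηα)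
    (hCpos : ∀ x ∈ E, 0 < C x) (hCcont : ContinuousOn C E)
    (K : (Fin d → ℝ) → ℝ)
    (hKnn : ∀ u, 0 ≤ K u) (hKint : ∫ u, K u = 1)
    (hKsupp : Function.support K ⊆ closedBall (0 : Fin d → ℝ) 1)
    :
    Tendsto (fun n => ⨆ x : Ω,
      |Mn d f C g α K (h n) (p n) (x : Fin d → ℝ) /
          (f (x : Fin d → ℝ) * C (x : Fin d → ℝ) * g (x : Fin d → ℝ) ^ p n) /
        (α (x : Fin d → ℝ) * betaFn (p n + 1) (α (x : Fin d → ℝ))) - 1|) atTop (nhds 0) ∧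
    ∃ M : ℝ, ∀ᶠ n in atTop,
      ⨆ x : Ω,
        |Mn d f C g α K (h n) (p n) (x : Fin d → ℝ) /
            (f (x : Fin d → ℝ) * C (x : Fin d → ℝ) * g (x : Fin d → ℝ) ^ p n) /
          (α (x : Fin d → ℝ) * betaFn (p n + 1) (α (x : Fin d → ℝ))) -
         ∫ u in closedBall (0 : Fin d → ℝ) 1,
           (f ((x : Fin d → ℝ) - h n • u) * C ((x : Fin d → ℝ) - h n • u) *
               Real.Gamma (α ((x : Fin d → ℝ) - h n • u) + 1) /
             (f (x : Fin d → ℝ) * C (x : Fin d → ℝ) * Real.Gamma (α (x : Fin d → ℝ) + 1))) *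
           Real.exp (p n * ((g ((x : Fin d → ℝ) - h n • u) - g (x : Fin d → ℝ)) / g (x : Fin d → ℝ)) -
             Real.log (p n) * (α ((x : Fin d → ℝ) - h n • u) - α (x : Fin d → ℝ))) * K u| ≤
      M * max (h n ^ ηg) ((p n)⁻¹ * h n ^ ηα) := by
  obtain ⟨cg, hcg, hgH⟩ := hgHolder
  obtain ⟨cα, hcα, hαH⟩ := hαHolder
  obtain ⟨δ, hδ, hδE⟩ := hΩcomp.exists_cthickening_subset_open isOpen_interior hΩE
  set S := cthickening δ Ω
  have hS : IsCompact S := hΩcomp.cthickening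
  have hSE : S ⊆ E := hδE.trans interior_subset
  have hgS := fun x (hx : x ∈ S) y (hy : y ∈ S) => hgH x (hSE hx) y (hSE hy)
  have hαS := fun x (hx : x ∈ S) y (hy : y ∈ S) => hαH x (hSE hx) y (hSE hy)
  have hgposS := fun y (hy : y ∈ S) => hgpos y (hSE hy)
  have hαposS := fun y (hy : y ∈ S) => hαpos y (hSE hy)
  have hgc := continuousOn_of_abs_sub_le_mul_rpow hηg hgS
  have hαc := continuousOn_of_abs_sub_le_mul_rpow hηα hαS
  have hw := continuousOn_gammaWeight (hfcont.mono hSE) (hCcont.mono hSE) hαc hαposS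
  have hwpos := fun y (hy : y ∈ S) =>
    gammaWeight_pos (hfpos y (hSE hy)) (hCpos y (hSE hy)) (hαposS y hy)
  have hh : ∀ n, 0 ≤ h n := fun n => (hhpos n).le
  obtain ⟨hKi, hK1⟩ := integrableOn_and_setIntegral_eq_one hKint hKsupp
  have key : ∀ᶠ n in atTop, ∀ x : Ω, ∀ G, ContinuousOn G S → ∀ ε : ℝ,
      (∀ y ∈ S, ‖x - y‖ ≤ h n → |gammaRatio (gammaWeight f C α) g α (p n) x y - G y| ≤ ε) →
      |Mn d f C g α K (h n) (p n) x / (f x * C x * g x ^ p n) / (α x * betaFn (p n + 1) (α x)) -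
        ∫ u in closedBall (0 : Fin d → ℝ) 1, G (x - h n • u) * K u| ≤ ε := by
    filter_upwards [hh0.eventually_le_const hδ, hptop.eventually_gt_atTop 0]
      with n hnδ hp x G hG ε hGε
    have hxE := hSE (self_subset_cthickening Ω x.2)
    exact abs_Mn_div_sub_setIntegral_le (hh n) hp (hfpos x hxE) (hCpos x hxE) hw hgc hαc hgposS
      hαposS hG (fun u hu => sub_smul_mem_cthickening x.2 (hh n) hnδ hu) hKi hKnn hK1 hGε
  obtain ⟨M, hM, hexpansion⟩ := exists_eventually_abs_gammaRatio_sub_expRatio_le hS hw hwpos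
    hgposS hgS hcg.le hηg hαposS hαS hcα.le hηα hptop hh0 hh hph
  refine ⟨tendsto_iSup_abs_nhds_zero fun ε hε => ?_, M, ?_⟩
  · filter_upwards [key, eventually_abs_gammaRatio_sub_one_le hS hw hwpos hgposS hgS hcg.le hηg
      hαposS hαS hcα.le hηα hptop hh0 hh hph hε] with n hn hεn x
    simpa [hK1] using hn x (fun _ => 1) continuousOn_const ε
      (hεn x (self_subset_cthickening Ω x.2))
  · filter_upwards [key, hexpansion] with n hn hMn
    exact Real.iSup_le (fun x => hn x _ (continuousOn_expRatio _ hw hgc hαc) _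
      (hMn x (self_subset_cthickening Ω x.2)))
      (mul_nonneg hM ((rpow_nonneg (hh n) _).trans (le_max_left _ _)))

theorem uniform_expansion_Mn
    (d : ℕ) (hd : 0 < d)
    (E Ω : Set (Fin d → ℝ)) (hEclosed : IsClosed E)
    (hΩcomp : IsCompact Ω) (hΩE : Ω ⊆ interior E)
    (p h : ℕ → ℝ) (hppos : ∀ n, 0 < p n) (hhpos : ∀ n, 0 < h n)
    (hptop : Tendsto p atTop atTop) (hh0 : Tendsto h atTop (nhds 0))
    (f g : (Fin d → ℝ) → ℝ) (ηg : ℝ) (hηg : 0 < ηg)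
    (hfcont : ContinuousOn f E) (hfpos : ∀ x ∈ E, 0 < f x)
    (hgpos : ∀ x ∈ E, 0 < g x)
    (hgHolder : ∃ cg > 0, ∀ x ∈ E, ∀ y ∈ E, |g x - g y| ≤ cg * ‖x - y‖ ^ ηg)
    (hph : Tendsto (fun n => p n * h n ^ ηg) atTop (nhds 0))
    (α C : (Fin d → ℝ) → ℝ) (ηα : ℝ) (hηα : 0 < ηα)
    (hαpos : ∀ x ∈ E, 0 < α x)
    (hαHolder : ∃ cα > 0, ∀ x ∈ E, ∀ y ∈ E, |α x - α y| ≤ cα * ‖x - y‖ ^ ηα)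
    (hCpos : ∀ x ∈ E, 0 < C x) (hCcont : ContinuousOn C E)
    (K : (Fin d → ℝ) → ℝ)
    (hKnn : ∀ u, 0 ≤ K u) (hKint : ∫ u, K u = 1)
    (hKsupp : Function.support K ⊆ closedBall (0 : Fin d → ℝ) 1)
    (ηK : ℝ) (hηK : 0 < ηK)
    (hKHolder : ∃ cK > 0, ∀ u v, |K u - K v| ≤ cK * ‖u - v‖ ^ ηK)
    :
    Tendsto (fun n => ⨆ x : Ω,
      |Mn d f C g α K (h n) (p n) (x : Fin d → ℝ) /
          (f (x : Fin d → ℝ) * C (x : Fin d → ℝ) * g (x : Fin d → ℝ) ^ p n) /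
        (α (x : Fin d → ℝ) * betaFn (p n + 1) (α (x : Fin d → ℝ))) - 1|) atTop (nhds 0) ∧
    ∃ M : ℝ, ∀ᶠ n in atTop,
      ⨆ x : Ω,
        |Mn d f C g α K (h n) (p n) (x : Fin d → ℝ) /
            (f (x : Fin d → ℝ) * C (x : Fin d → ℝ) * g (x : Fin d → ℝ) ^ p n) /
          (α (x : Fin d → ℝ) * betaFn (p n + 1) (α (x : Fin d → ℝ))) -
         ∫ u in closedBall (0 : Fin d → ℝ) 1,
           (f ((x : Fin d → ℝ) - h n • u) * C ((x : Fin d → ℝ) - h n • u) *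
               Real.Gamma (α ((x : Fin d → ℝ) - h n • u) + 1) /
             (f (x : Fin d → ℝ) * C (x : Fin d → ℝ) * Real.Gamma (α (x : Fin d → ℝ) + 1))) *
           Real.exp (p n * ((g ((x : Fin d → ℝ) - h n • u) - g (x : Fin d → ℝ)) / g (x : Fin d → ℝ)) -
             Real.log (p n) * (α ((x : Fin d → ℝ) - h n • u) - α (x : Fin d → ℝ))) * K u| ≤
      M * max (h n ^ ηg) ((p n)⁻¹ * h n ^ ηα) :=
  uniform_expansion_Mn_general d E Ω hΩcomp hΩE p h hhpos hptop hh0 f g ηg hηg hfcont hfpos hgpos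
    hgHolder hph α C ηα hηα hαpos hαHolder hCpos hCcont K hKnn hKint hKsupp
end
end

section
/- Let (X_n) be a sequence of positive real-valued random variables such that for every positive nonrandom sequence (δ_n) converging to 0, the sequence (δ_n X_n) converges to 0 almost surely. Then P( limsup_{n→∞} X_n = +∞ ) = 0, i.e. X_n = O(1) almost surely. -/
open MeasureTheory Filter Set Metric ProbabilityTheory
open scoped ENNReal

noncomputable section

theorem as_bounded_of_forall_slowdown_tendsto_zero
    {Θ : Type*} [MeasureSpace Θ] [IsProbabilityMeasure (ℙ : Measure Θ)]
    (X : ℕ → Θ → ℝ) (hXmeas : ∀ n, Measurable (X n)) (hXpos : ∀ n ω, 0 < X n ω)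
    (hX : ∀ δ : ℕ → ℝ, (∀ n, 0 < δ n) → Tendsto δ atTop (nhds 0) →
      ∀ᵐ ω ∂ℙ, Tendsto (fun n => δ n * X n ω) atTop (nhds 0)) :
    ℙ {ω | Filter.atTop.limsup (fun n => (X n ω : EReal)) = ⊤} = 0 ∧
    ∀ᵐ ω ∂ℙ, BddAbove (Set.range fun n => X n ω) := by
  -- the measurable "unbounded" set
  set G : Set Θ := ⋂ (c : ℕ), ⋃ n, {ω | (c : ℝ) < X n ω} with hGdef
  have hGm : MeasurableSet G := by
    refine MeasurableSet.iInter fun c => MeasurableSet.iUnion fun n => ?_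
    exact (hXmeas n) measurableSet_Ioi
  have hGeq : ∀ ω, ω ∈ G ↔ ¬ BddAbove (Set.range fun n => X n ω) := by
    intro ω
    constructor
    · rintro hω ⟨b, hb⟩
      obtain ⟨c, hc⟩ := exists_nat_gt b
      obtain ⟨n, hn⟩ := mem_iUnion.1 (mem_iInter.1 hω c)
      exact absurd (hb (mem_range_self n)) (not_le.2 (hc.trans hn))
    · intro hω
      refine mem_iInter.2 fun c => mem_iUnion.2 ?_
      by_contra h
      push_neg at h
      exact hω ⟨c, by rintro x ⟨n, rfl⟩; exact le_of_not_gt (h n)⟩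
  -- tail unboundedness
  have hGtail : ∀ ω ∈ G, ∀ (m : ℕ) (c : ℝ), ∃ n, m < n ∧ c < X n ω := by
    intro ω hω m c
    set M : ℝ := (Finset.range (m + 1)).sup' (by simp) (fun i => X i ω) with hM
    obtain ⟨c', hc'⟩ := exists_nat_gt (max c M)
    obtain ⟨n, hn⟩ := mem_iUnion.1 (mem_iInter.1 hω c')
    refine ⟨n, ?_, lt_trans (lt_of_le_of_lt (le_max_left _ _) hc') hn⟩
    by_contra h
    push_neg at h
    have : X n ω ≤ M := Finset.le_sup' (fun i => X i ω) (Finset.mem_range.2 (Nat.lt_succ_of_le h))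
    exact absurd hn (not_lt.2 (this.trans ((le_max_right c M).trans hc'.le)))
  -- main claim: ℙ G = 0
  have hG0 : ℙ G = 0 := by
    by_contra hG
    -- key choice lemma
    have key : ∀ (k m : ℕ), ∃ N, m < N ∧
        ℙ (G \ ⋃ n ∈ Finset.Ioc m N, {ω | ((k : ℝ) + 2) ^ 2 < X n ω}) ≤ ℙ G * 2⁻¹ ^ (k + 2) := by
      intro k m
      set s : ℕ → Set Θ := fun N => G \ ⋃ n ∈ Finset.Ioc m N, {ω | ((k : ℝ) + 2) ^ 2 < X n ω}
        with hs
      have hsm : ∀ N, NullMeasurableSet (s N) ℙ := by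
        intro N
        refine (hGm.diff ?_).nullMeasurableSet
        exact MeasurableSet.biUnion (Finset.countable_toSet _)
          (fun n _ => (hXmeas n) measurableSet_Ioi)
      have hanti : Antitone s := by
        intro a b hab
        refine diff_subset_diff_right (iUnion₂_subset fun n hn => ?_)
        intro ω hω
        exact mem_iUnion₂.2 ⟨n, Finset.mem_Ioc.2
          ⟨(Finset.mem_Ioc.1 hn).1, (Finset.mem_Ioc.1 hn).2.trans hab⟩, hω⟩
      have hempty : ⋂ N, s N = ∅ := by
        refine eq_empty_iff_forall_notMem.2 fun ω hω => ?_
        have hωG : ω ∈ G := (mem_iInter.1 hω 0).1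
        obtain ⟨n, hn1, hn2⟩ := hGtail ω hωG m (((k : ℝ) + 2) ^ 2)
        exact (mem_iInter.1 hω n).2 (mem_iUnion₂.2 ⟨n, Finset.mem_Ioc.2 ⟨hn1, le_rfl⟩, hn2⟩)
      have htend : Tendsto (fun N => ℙ (s N)) atTop (nhds 0) := by
        have := tendsto_measure_iInter_atTop (μ := ℙ) hsm hanti ⟨0, measure_ne_top _ _⟩
        rwa [hempty, measure_empty] at this
      have hpos : (0 : ℝ≥0∞) < ℙ G * 2⁻¹ ^ (k + 2) := by
        refine ENNReal.mul_pos hG ?_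
        simp [pow_ne_zero]
      have := (htend.eventually_lt_const hpos).and (eventually_gt_atTop m)
      obtain ⟨N, h1, h2⟩ := this.exists
      exact ⟨N, h2, h1.le⟩
    choose F hF1 hF2 using key
    -- the recursive sequence of indices
    set N : ℕ → ℕ := fun k => Nat.rec 0 (fun k ih => F k ih) k with hNdef
    have hNsucc : ∀ k, N (k + 1) = F k (N k) := fun k => rfl
    have hNlt : ∀ k, N k < N (k + 1) := fun k => by rw [hNsucc]; exact hF1 k (N k)
    have hNmono : StrictMono N := strictMono_nat_of_lt_succ hNlt
    have hNle : ∀ k, k ≤ N k := fun k => hNmono.le_apply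
    -- the events
    set C : ℕ → Set Θ := fun k =>
      ⋃ n ∈ Finset.Ioc (N k) (N (k + 1)), {ω | ((k : ℝ) + 2) ^ 2 < X n ω} with hCdef
    have hC : ∀ k, ℙ (G \ C k) ≤ ℙ G * 2⁻¹ ^ (k + 2) := by
      intro k
      have := hF2 k (N k)
      rwa [← hNsucc k] at this
    -- the slowdown sequence
    have hex : ∀ n, ∃ k, n ≤ N k := fun n => ⟨n, hNle n⟩
    set κ : ℕ → ℕ := fun n => Nat.find (hex n) with hκdef
    have hκspec : ∀ n, n ≤ N (κ n) := fun n => Nat.find_spec (hex n)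
    have hκle : ∀ n k, n ≤ N k → κ n ≤ k := fun n k h => Nat.find_min' (hex n) h
    have hκtop : Tendsto κ atTop atTop := by
      refine tendsto_atTop.2 fun K => ?_
      filter_upwards [eventually_ge_atTop (N K + 1)] with n hn
      by_contra h
      push_neg at h
      exact absurd ((hκspec n).trans (hNmono.monotone h.le)) (by omega)
    set δ : ℕ → ℝ := fun n => 1 / ((κ n : ℝ) + 1) with hδdef
    have hδpos : ∀ n, 0 < δ n := fun n => by positivity
    have hδtend : Tendsto δ atTop (nhds 0) :=
      tendsto_one_div_add_atTop_nhds_zero_nat.comp hκtop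
    -- on G ∩ ⋂ C k the slowed sequence does not tend to 0
    have hbad : (G ∩ ⋂ k, C k) ⊆ {ω | ¬ Tendsto (fun n => δ n * X n ω) atTop (nhds 0)} := by
      rintro ω ⟨hωG, hωC⟩ htend
      obtain ⟨m, hm⟩ := (eventually_atTop.1 (htend.eventually_lt_const one_pos))
      obtain ⟨n, hn, hn2⟩ := mem_iUnion₂.1 (mem_iInter.1 hωC m)
      have hnIoc := Finset.mem_Ioc.1 hn
      have hκn : κ n ≤ m + 1 := hκle n (m + 1) hnIoc.2
      have hnm : m ≤ n := le_trans (hNle m) hnIoc.1.le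
      have hδn : 1 / ((m : ℝ) + 2) ≤ δ n := by
        rw [hδdef]
        apply one_div_le_one_div_of_le (by positivity)
        have : (κ n : ℝ) ≤ (m : ℝ) + 1 := by exact_mod_cast hκn
        linarith
      have h1 : ((m : ℝ) + 2) ≤ δ n * X n ω := by
        have := mul_le_mul hδn (le_of_lt hn2) (by positivity) (le_of_lt (hδpos n))
        calc ((m : ℝ) + 2) = 1 / ((m : ℝ) + 2) * ((m : ℝ) + 2) ^ 2 := by
              field_simp
          _ ≤ δ n * X n ω := this
      have h2 := hm n hnm
      have hm0 : (0 : ℝ) ≤ (m : ℝ) := Nat.cast_nonneg m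
      linarith
    -- but that set must have measure zero
    have hmeas0 : ℙ (G ∩ ⋂ k, C k) = 0 := by
      have := hX δ hδpos hδtend
      rw [ae_iff] at this
      exact measure_mono_null hbad this
    -- sum bound
    have hsum : ℙ (G \ ⋂ k, C k) ≤ ℙ G / 2 := by
      have h1 : G \ ⋂ k, C k ⊆ ⋃ k, (G \ C k) := by
        intro ω hω
        obtain ⟨hωG, hωC⟩ := hω
        obtain ⟨k, hk⟩ : ∃ k, ω ∉ C k := by
          by_contra h; push_neg at h; exact hωC (mem_iInter.2 h)
        exact mem_iUnion.2 ⟨k, hωG, hk⟩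
      calc ℙ (G \ ⋂ k, C k) ≤ ∑' k, ℙ (G \ C k) :=
            le_trans (measure_mono h1) (measure_iUnion_le _)
        _ ≤ ∑' k, ℙ G * 2⁻¹ ^ (k + 2) := ENNReal.tsum_le_tsum hC
        _ = ℙ G * (2⁻¹ ^ 2 * ∑' k : ℕ, 2⁻¹ ^ k) := by
            rw [← ENNReal.tsum_mul_left]
            congr 1
            rw [← ENNReal.tsum_mul_left]
            congr 1 with k
            ring
        _ = ℙ G / 2 := by
            rw [ENNReal.tsum_geometric]
            have : ((1 : ℝ≥0∞) - 2⁻¹)⁻¹ = 2 := by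
              rw [ENNReal.one_sub_inv_two]
              simp
            rw [this]
            rw [ENNReal.div_eq_inv_mul]
            have h4 : ((2 : ℝ≥0∞)⁻¹) ^ 2 * 2 = 2⁻¹ := by
              rw [pow_two]
              rw [mul_assoc, ENNReal.inv_mul_cancel (by norm_num) (by norm_num)]
              simp
            rw [h4, mul_comm]
    -- contradiction
    have : ℙ G ≤ ℙ G / 2 := by
      calc ℙ G = ℙ ((G ∩ ⋂ k, C k) ∪ (G \ ⋂ k, C k)) := by
            rw [inter_union_diff]
        _ ≤ ℙ (G ∩ ⋂ k, C k) + ℙ (G \ ⋂ k, C k) := measure_union_le _ _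
        _ = ℙ (G \ ⋂ k, C k) := by rw [hmeas0, zero_add]
        _ ≤ ℙ G / 2 := hsum
    exact absurd this (not_le.2 (ENNReal.half_lt_self hG (measure_ne_top _ _)))
  -- assemble the two conclusions
  have hae : ∀ᵐ ω ∂ℙ, BddAbove (Set.range fun n => X n ω) := by
    rw [ae_iff]
    have : {ω | ¬ BddAbove (Set.range fun n => X n ω)} = G := by
      ext ω; simp only [mem_setOf_eq]; rw [hGeq ω]
    rw [this]; exact hG0
  refine ⟨?_, hae⟩
  refine measure_mono_null ?_ hG0
  intro ω hω
  rw [hGeq ω]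
  rintro ⟨b, hb⟩
  have hle : Filter.atTop.limsup (fun n => (X n ω : EReal)) ≤ (b : EReal) :=
    limsup_le_of_le (by isBoundedDefault)
      (Filter.Eventually.of_forall fun n => by exact_mod_cast hb (mem_range_self n))
  rw [mem_setOf_eq] at hω
  rw [hω] at hle
  exact absurd hle (by simp)
end
end
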